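/- arXiv:2507.06759 — 5 statements merged into one kernel-verified Lean document; each statement's English description precedes it below -/
import Mathlib

section
/- Let μ be a convex probability measure on ℝ with density whose barycenter exists. For any a ≤ β_μ, any r,t in (max{a, α_μ}, β_μ) and λ ∈ [0,1], one has μ((a, (1−λ)r + λt]) ≥ Φ_μ((1−λ)Φ_μ⁻¹(μ((a,r])) + λ Φ_μ⁻¹(μ((a,t]))). -/
open MeasureTheory Set

/-- The cumulative distribution function of a measure on `ℝ`. -/
noncomputable def cdfFun (μ : Measure ℝ) (t : ℝ) : ℝ := (μ (Iic t)).toReal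

/-- Generalized inverse (quantile function) of the CDF. -/
noncomputable def cdfInv (μ : Measure ℝ) (y : ℝ) : ℝ := sInf {t : ℝ | y ≤ cdfFun μ t}

section basic
variable (μ : Measure ℝ) [IsProbabilityMeasure μ]

lemma cdfFun_mono : Monotone (cdfFun μ) := fun a b h =>
  ENNReal.toReal_mono (measure_ne_top _ _) (measure_mono (Iic_subset_Iic.mpr h))

lemma cdfFun_nonneg (t : ℝ) : 0 ≤ cdfFun μ t := ENNReal.toReal_nonneg

lemma cdfFun_le_one (t : ℝ) : cdfFun μ t ≤ 1 := by
  rw [cdfFun, ← ENNReal.toReal_one]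
  exact ENNReal.toReal_mono ENNReal.one_ne_top (prob_le_one)

lemma measure_Ioc_toReal (a b : ℝ) (hab : a ≤ b) :
    (μ (Ioc a b)).toReal = cdfFun μ b - cdfFun μ a := by
  have h1 : Iic b \ Iic a = Ioc a b := Iic_sdiff_Iic
  have h2 : μ (Ioc a b) = μ (Iic b) - μ (Iic a) := by
    rw [← h1, measure_diff (Iic_subset_Iic.mpr hab) measurableSet_Iic.nullMeasurableSet
      (measure_ne_top _ _)]
  rw [h2, cdfFun, cdfFun, ENNReal.toReal_sub_of_le
    (measure_mono (Iic_subset_Iic.mpr hab)) (measure_ne_top _ _)]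

end basic

section cont
variable (μ : Measure ℝ) [IsProbabilityMeasure μ]

lemma cdfFun_eq_cdf : cdfFun μ = ⇑(ProbabilityTheory.cdf μ) := by
  funext x; rw [ProbabilityTheory.cdf_eq_real]; rfl

lemma cdfFun_continuous [NullSingletonClass μ] : Continuous (cdfFun μ) := by
  rw [cdfFun_eq_cdf]
  rw [continuous_iff_continuousAt]
  intro x
  rw [(ProbabilityTheory.cdf μ).mono.continuousAt_iff_leftLim_eq_rightLim]
  have h1 : Function.rightLim (ProbabilityTheory.cdf μ) x = ProbabilityTheory.cdf μ x :=
    (ProbabilityTheory.cdf μ).rightLim_eq x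
  have h2 : (ProbabilityTheory.cdf μ).measure {x} = 0 := by
    rw [ProbabilityTheory.measure_cdf]; exact measure_singleton x
  rw [StieltjesFunction.measure_singleton] at h2
  have h3 := (ProbabilityTheory.cdf μ).mono.leftLim_le (le_refl x)
  have h4 : ProbabilityTheory.cdf μ x - Function.leftLim (ProbabilityTheory.cdf μ) x ≤ 0 := by
    by_contra h
    push_neg at h
    rw [ENNReal.ofReal_eq_zero] at h2
    linarith
  rw [h1]; linarith

lemma cdfFun_tendsto_atBot' : Filter.Tendsto (cdfFun μ) Filter.atBot (nhds 0) := by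
  rw [cdfFun_eq_cdf]; exact ProbabilityTheory.tendsto_cdf_atBot μ
end cont

section quantile
variable (μ : Measure ℝ) [IsProbabilityMeasure μ] [NullSingletonClass μ]

lemma cdfInv_spec {y w : ℝ} (hy : 0 < y) (hw : y ≤ cdfFun μ w) :
    cdfFun μ (cdfInv μ y) = y ∧ cdfInv μ y ≤ w := by
  set S := {t : ℝ | y ≤ cdfFun μ t} with hS
  have hne : w ∈ S := hw
  obtain ⟨t₀, ht₀⟩ : ∃ t₀, cdfFun μ t₀ < y :=
    ((cdfFun_tendsto_atBot' μ).eventually (Iio_mem_nhds hy)).exists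
  have hbdd : BddBelow S := by
    refine ⟨t₀, fun s hs => ?_⟩
    by_contra h
    push_neg at h
    have : cdfFun μ s < y := lt_of_le_of_lt (cdfFun_mono μ h.le) ht₀
    exact absurd hs (not_le.mpr this)
  have hclosed : IsClosed S := IsClosed.preimage (cdfFun_continuous μ) isClosed_Ici
  have hmem : sInf S ∈ S := hclosed.csInf_mem ⟨w, hne⟩ hbdd
  have hle : cdfFun μ (sInf S) ≤ y := by
    have hseq : Filter.Tendsto (fun n : ℕ => sInf S - 1/(n+1)) Filter.atTop (nhds (sInf S)) := by
      have := tendsto_one_div_add_atTop_nhds_zero_nat (𝕜 := ℝ)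
      simpa using Filter.Tendsto.const_sub (sInf S) this
    have hcomp : Filter.Tendsto (fun n : ℕ => cdfFun μ (sInf S - 1/(n+1))) Filter.atTop
        (nhds (cdfFun μ (sInf S))) :=
      ((cdfFun_continuous μ).continuousAt.tendsto).comp hseq
    refine le_of_tendsto hcomp (Filter.Eventually.of_forall fun n => ?_)
    have hlt : sInf S - 1/(n+1) < sInf S := by
      have : (0:ℝ) < 1/(n+1) := by positivity
      linarith
    have : sInf S - 1/(n+1) ∉ S := fun hmem' => absurd (csInf_le hbdd hmem') (not_le.mpr hlt)
    simp only [hS, mem_setOf_eq, not_le] at this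
    exact this.le
  exact ⟨le_antisymm hle hmem, csInf_le hbdd hne⟩
end quantile

section density

lemma frontier_null {S : Set ℝ} (hS : Convex ℝ S) :
    volume (S \ interior S) = 0 := by
  rcases (interior S).eq_empty_or_nonempty with hU | ⟨x₀, hx₀⟩
  · have hsub : S.Subsingleton := by
      intro x hx y hy
      by_contra hxy
      rcases lt_or_gt_of_ne hxy with h | h
      · have : Ioo x y ⊆ S := fun z hz => hS.ordConnected.out hx hy ⟨hz.1.le, hz.2.le⟩
        have : Ioo x y ⊆ interior S := interior_maximal this isOpen_Ioo
        rw [hU] at this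
        exact absurd (this (by constructor <;> linarith : (x+y)/2 ∈ Ioo x y)) (notMem_empty _)
      · have : Ioo y x ⊆ S := fun z hz => hS.ordConnected.out hy hx ⟨hz.1.le, hz.2.le⟩
        have : Ioo y x ⊆ interior S := interior_maximal this isOpen_Ioo
        rw [hU] at this
        exact absurd (this (by constructor <;> linarith : (y+x)/2 ∈ Ioo y x)) (notMem_empty _)
    exact measure_mono_null (diff_subset) (hsub.measure_zero volume)
  · set U := interior S with hUdef
    have hsub : ∀ p q : ℝ, p ∈ S → q ∈ S \ U → p < q → q < x₀ → False := by
      intro p q hp hq hpq hqx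
      have : q ∈ openSegment ℝ x₀ p := by
        rw [openSegment_symm, openSegment_eq_Ioo (lt_trans hpq hqx)]
        exact ⟨hpq, hqx⟩
      exact (notMem_of_mem_diff hq)
        (hS.openSegment_interior_self_subset_interior hx₀ hp this)
    have hsub' : ∀ p q : ℝ, p ∈ S → q ∈ S \ U → q < p → x₀ < q → False := by
      intro p q hp hq hpq hqx
      have : q ∈ openSegment ℝ x₀ p := by
        rw [openSegment_eq_Ioo (lt_trans hqx hpq)]
        exact ⟨hqx, hpq⟩
      exact (notMem_of_mem_diff hq)
        (hS.openSegment_interior_self_subset_interior hx₀ hp this)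
    set A := {z ∈ S \ U | z < x₀} with hA
    set B := {z ∈ S \ U | x₀ < z} with hB
    have hAs : A.Subsingleton := by
      intro z hz z' hz'
      by_contra hne
      rcases lt_or_gt_of_ne hne with h | h
      · exact hsub z z' hz.1.1 hz'.1 h hz'.2
      · exact hsub z' z hz'.1.1 hz.1 h hz.2
    have hBs : B.Subsingleton := by
      intro z hz z' hz'
      by_contra hne
      rcases lt_or_gt_of_ne hne with h | h
      · exact hsub' z' z hz'.1.1 hz.1 h hz.2
      · exact hsub' z z' hz.1.1 hz'.1 h hz'.2
    have hcover : S \ U ⊆ A ∪ B := by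
      intro z hz
      rcases lt_trichotomy z x₀ with h | h | h
      · exact Or.inl ⟨hz, h⟩
      · exact absurd hx₀ (h ▸ (notMem_of_mem_diff hz))
      · exact Or.inr ⟨hz, h⟩
    refine measure_mono_null hcover ?_
    exact measure_union_null (hAs.measure_zero volume) (hBs.measure_zero volume)

end density

section density2
variable {μ : Measure ℝ} [IsProbabilityMeasure μ] {ψ : ℝ → ℝ}

lemma noAtoms_of_density (hμ : μ = volume.withDensity (fun t => ENNReal.ofReal (ψ t))) :
    NullSingletonClass μ := by
  constructor
  intro x
  rw [hμ, withDensity_apply _ (measurableSet_singleton x),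
    Measure.restrict_eq_zero.mpr (measure_singleton x), lintegral_zero_measure]

lemma ae_eq_indicator (hψpos : ∀ t, 0 ≤ ψ t) (hconv : Convex ℝ {t : ℝ | 0 < ψ t}) :
    (fun t => ENNReal.ofReal (ψ t)) =ᵐ[volume]
      (fun t => ENNReal.ofReal ((interior {t : ℝ | 0 < ψ t}).indicator ψ t)) := by
  set S := {t : ℝ | 0 < ψ t} with hSdef
  set U := interior S with hUdef
  refine (MeasureTheory.ae_iff).mpr (measure_mono_null ?_ (frontier_null hconv))
  intro x hx
  simp only [mem_setOf_eq] at hx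
  constructor
  · by_contra hS
    have hz : ψ x = 0 := le_antisymm (not_lt.mp hS) (hψpos x)
    have hU : x ∉ U := fun h => hS (interior_subset h)
    exact hx (by rw [hz, indicator_of_notMem hU])
  · intro hU
    exact hx (by rw [indicator_of_mem hU])

lemma cdfFun_eq_zero (hψpos : ∀ t, 0 ≤ ψ t) (hconv : Convex ℝ {t : ℝ | 0 < ψ t})
    (hμ : μ = volume.withDensity (fun t => ENNReal.ofReal (ψ t)))
    {z : ℝ} (h : Iic z ∩ interior {t : ℝ | 0 < ψ t} = ∅) : cdfFun μ z = 0 := by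
  have hz : μ (Iic z) = 0 := by
    rw [hμ, withDensity_congr_ae (ae_eq_indicator hψpos hconv),
      withDensity_apply _ measurableSet_Iic]
    have hae : (fun t => ENNReal.ofReal ((interior {t : ℝ | 0 < ψ t}).indicator ψ t))
        =ᵐ[volume.restrict (Iic z)] (fun _ => (0:ENNReal)) := by
      filter_upwards [ae_restrict_mem measurableSet_Iic] with x hx
      have : x ∉ interior {t : ℝ | 0 < ψ t} := fun hU =>
        (eq_empty_iff_forall_notMem.mp h x) ⟨hx, hU⟩
      rw [indicator_of_notMem this, ENNReal.ofReal_zero]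
    rw [lintegral_congr_ae hae, lintegral_zero]
  rw [cdfFun, hz, ENNReal.toReal_zero]

lemma cdfFun_eq_one (hψpos : ∀ t, 0 ≤ ψ t) (hconv : Convex ℝ {t : ℝ | 0 < ψ t})
    (hμ : μ = volume.withDensity (fun t => ENNReal.ofReal (ψ t)))
    {z : ℝ} (h : Ioi z ∩ interior {t : ℝ | 0 < ψ t} = ∅) : cdfFun μ z = 1 := by
  have hz : μ (Ioi z) = 0 := by
    rw [hμ, withDensity_congr_ae (ae_eq_indicator hψpos hconv),
      withDensity_apply _ measurableSet_Ioi]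
    have hae : (fun t => ENNReal.ofReal ((interior {t : ℝ | 0 < ψ t}).indicator ψ t))
        =ᵐ[volume.restrict (Ioi z)] (fun _ => (0:ENNReal)) := by
      filter_upwards [ae_restrict_mem measurableSet_Ioi] with x hx
      have : x ∉ interior {t : ℝ | 0 < ψ t} := fun hU =>
        (eq_empty_iff_forall_notMem.mp h x) ⟨hx, hU⟩
      rw [indicator_of_notMem this, ENNReal.ofReal_zero]
    rw [lintegral_congr_ae hae, lintegral_zero]
  have : μ (Iic z) = 1 := by
    have hc := measure_compl (μ := μ) (s := Ioi z) measurableSet_Ioi (measure_ne_top μ _)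
    rw [hz] at hc
    simpa [compl_Ioi] using hc
  rw [cdfFun, this, ENNReal.toReal_one]

lemma continuousOn_psi (hconv : ConvexOn ℝ {t : ℝ | 0 < ψ t} (fun t => (ψ t)⁻¹)) :
    ContinuousOn ψ (interior {t : ℝ | 0 < ψ t}) := by
  have h1 : ConvexOn ℝ (interior {t : ℝ | 0 < ψ t}) (fun t => (ψ t)⁻¹) :=
    hconv.subset interior_subset hconv.1.interior
  have h2 : ContinuousOn (fun t => (ψ t)⁻¹) (interior {t : ℝ | 0 < ψ t}) :=
    h1.continuousOn isOpen_interior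
  have h3 : ContinuousOn (fun t => ((ψ t)⁻¹)⁻¹) (interior {t : ℝ | 0 < ψ t}) :=
    h2.inv₀ fun x hx => by
      have h0 : x ∈ {t : ℝ | 0 < ψ t} := interior_subset hx
      exact inv_ne_zero (ne_of_gt h0)
  exact h3.congr fun x hx => (inv_inv (ψ x)).symm
end density2

section ftc
variable {μ : Measure ℝ} [IsProbabilityMeasure μ] {ψ : ℝ → ℝ}

lemma measure_Ioc_eq_integral (hψpos : ∀ t, 0 ≤ ψ t)
    (hμ : μ = volume.withDensity (fun t => ENNReal.ofReal (ψ t)))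
    (hcont : ContinuousOn ψ (interior {t : ℝ | 0 < ψ t}))
    {x y : ℝ} (hxy : x ≤ y) (hsub : Icc x y ⊆ interior {t : ℝ | 0 < ψ t}) :
    (μ (Ioc x y)).toReal = ∫ u in x..y, ψ u := by
  have hcont' : ContinuousOn ψ (Icc x y) := hcont.mono hsub
  have hint : IntegrableOn ψ (Ioc x y) volume :=
    (hcont'.integrableOn_Icc).mono_set Ioc_subset_Icc_self
  have hmeq : μ (Ioc x y) = ENNReal.ofReal (∫ u in Ioc x y, ψ u) := by
    rw [hμ, withDensity_apply _ measurableSet_Ioc,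
      ← MeasureTheory.ofReal_integral_eq_lintegral_ofReal hint
        (Filter.Eventually.of_forall fun u => hψpos u)]
  rw [hmeq, ENNReal.toReal_ofReal (integral_nonneg fun u => hψpos u),
    intervalIntegral.integral_of_le hxy]

lemma hasDerivAt_cdfFun (hψpos : ∀ t, 0 ≤ ψ t)
    (hμ : μ = volume.withDensity (fun t => ENNReal.ofReal (ψ t)))
    (hcont : ContinuousOn ψ (interior {t : ℝ | 0 < ψ t}))
    {z : ℝ} (hz : z ∈ interior {t : ℝ | 0 < ψ t}) :
    HasDerivAt (cdfFun μ) (ψ z) z := by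
  set U := interior {t : ℝ | 0 < ψ t} with hUdef
  obtain ⟨δ, hδpos, hball⟩ := Metric.isOpen_iff.mp isOpen_interior z hz
  set δ' := δ/2 with hδ'def
  have hδ'pos : 0 < δ' := by positivity
  have hIcc : Icc (z - δ') (z + δ') ⊆ U := by
    intro w hw
    apply hball
    rw [Metric.mem_ball, Real.dist_eq, abs_lt]
    obtain ⟨h1, h2⟩ := hw
    constructor <;> [linarith [hδ'pos]; linarith [hδ'pos]]
  have hintd : IntervalIntegrable ψ volume (z - δ') z := by
    apply ContinuousOn.intervalIntegrable
    apply hcont.mono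
    intro w hw
    apply hIcc
    rw [uIcc_of_le (by linarith)] at hw
    exact ⟨hw.1, le_trans hw.2 (by linarith)⟩
  have hmeas : StronglyMeasurableAtFilter ψ (nhds z) volume :=
    hcont.stronglyMeasurableAtFilter isOpen_interior z hz
  have hcz : ContinuousAt ψ z := hcont.continuousAt (isOpen_interior.mem_nhds hz)
  have hF : HasDerivAt (fun y => ∫ u in (z - δ')..y, ψ u) (ψ z) z :=
    intervalIntegral.integral_hasDerivAt_right hintd hmeas hcz
  have hFc : HasDerivAt (fun y => cdfFun μ (z - δ') + ∫ u in (z - δ')..y, ψ u) (ψ z) z :=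
    hF.const_add (cdfFun μ (z - δ'))
  apply hFc.congr_of_eventuallyEq
  have hnhds : Ioo (z - δ') (z + δ') ∈ nhds z :=
    Ioo_mem_nhds (by linarith) (by linarith)
  filter_upwards [hnhds] with y hy
  have hy1 : z - δ' ≤ y := hy.1.le
  have hsub' : Icc (z - δ') y ⊆ U := fun w hw => hIcc ⟨hw.1, le_trans hw.2 hy.2.le⟩
  have := measure_Ioc_eq_integral hψpos hμ hcont hy1 hsub'
  rw [measure_Ioc_toReal μ _ _ hy1] at this
  linarith [this]
end ftc

section strict
variable {μ : Measure ℝ} [IsProbabilityMeasure μ] {ψ : ℝ → ℝ}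

lemma cdfFun_strict (hψpos : ∀ t, 0 ≤ ψ t)
    (hμ : μ = volume.withDensity (fun t => ENNReal.ofReal (ψ t)))
    (hcont : ContinuousOn ψ (interior {t : ℝ | 0 < ψ t}))
    {x y : ℝ} (hxy : x < y) (hsub : Icc x y ⊆ interior {t : ℝ | 0 < ψ t}) :
    cdfFun μ x < cdfFun μ y := by
  have hint : IntervalIntegrable ψ volume x y := by
    apply ContinuousOn.intervalIntegrable
    apply (hcont.mono hsub).mono
    rw [uIcc_of_le hxy.le]
  have hpos : 0 < ∫ u in x..y, ψ u := by
    apply intervalIntegral.intervalIntegral_pos_of_pos_on hint _ hxy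
    intro w hw
    have : w ∈ {t : ℝ | 0 < ψ t} := interior_subset (hsub ⟨hw.1.le, hw.2.le⟩)
    exact this
  have := measure_Ioc_eq_integral hψpos hμ hcont hxy.le hsub
  rw [measure_Ioc_toReal μ _ _ hxy.le] at this
  linarith
end strict

section gprops
variable {μ : Measure ℝ} [IsProbabilityMeasure μ] {ψ : ℝ → ℝ}

lemma quantile_props (hψpos : ∀ t, 0 ≤ ψ t)
    (hμ : μ = volume.withDensity (fun t => ENNReal.ofReal (ψ t)))
    (hconv : ConvexOn ℝ {t : ℝ | 0 < ψ t} (fun t => (ψ t)⁻¹))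
    {x r K : ℝ} (hr : cdfFun μ r = cdfFun μ x + K) {u : ℝ} (hu : u ∈ Ioo 0 K) :
    cdfFun μ (cdfInv μ (cdfFun μ x + u)) = cdfFun μ x + u ∧
      cdfInv μ (cdfFun μ x + u) ≤ r ∧ x < cdfInv μ (cdfFun μ x + u) ∧
      cdfInv μ (cdfFun μ x + u) ∈ interior {t : ℝ | 0 < ψ t} := by
  haveI : NullSingletonClass μ := noAtoms_of_density hμ
  have hy0 : 0 < cdfFun μ x + u := by
    have := cdfFun_nonneg μ x
    linarith [hu.1]
  have hyr : cdfFun μ x + u ≤ cdfFun μ r := by rw [hr]; linarith [hu.2]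
  obtain ⟨heq, hle⟩ := cdfInv_spec μ hy0 hyr
  set g := cdfInv μ (cdfFun μ x + u) with hgdef
  have hxg : x < g := by
    by_contra hc
    push_neg at hc
    have := cdfFun_mono μ hc
    rw [heq] at this
    linarith [hu.1]
  refine ⟨heq, hle, hxg, ?_⟩
  set U := interior {t : ℝ | 0 < ψ t} with hUdef
  have hΦg0 : 0 < cdfFun μ g := by rw [heq]; exact hy0
  have hΦg1 : cdfFun μ g < 1 := by
    rw [heq]
    calc cdfFun μ x + u < cdfFun μ x + K := by linarith [hu.2]
    _ = cdfFun μ r := hr.symm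
    _ ≤ 1 := cdfFun_le_one μ r
  by_cases hA : Iic g ∩ U = ∅
  · exact absurd (cdfFun_eq_zero hψpos hconv.1 hμ hA) (ne_of_gt hΦg0)
  by_cases hB : Ioi g ∩ U = ∅
  · exact absurd (cdfFun_eq_one hψpos hconv.1 hμ hB) (ne_of_lt hΦg1)
  obtain ⟨w₁, hw₁⟩ := nonempty_iff_ne_empty.mpr hA
  obtain ⟨w₂, hw₂⟩ := nonempty_iff_ne_empty.mpr hB
  rcases eq_or_lt_of_le (mem_Iic.mp hw₁.1) with rfl | hlt
  · exact hw₁.2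
  · have hUconv : Convex ℝ U := hconv.1.interior
    exact hUconv.ordConnected.out hw₁.2 hw₂.2 ⟨hlt.le, (mem_Ioi.mp hw₂.1).le⟩
end gprops

section gderiv
variable {μ : Measure ℝ} [IsProbabilityMeasure μ] {ψ : ℝ → ℝ}

lemma quantile_hasDerivAt (hψpos : ∀ t, 0 ≤ ψ t)
    (hμ : μ = volume.withDensity (fun t => ENNReal.ofReal (ψ t)))
    (hconv : ConvexOn ℝ {t : ℝ | 0 < ψ t} (fun t => (ψ t)⁻¹))
    (hcont : ContinuousOn ψ (interior {t : ℝ | 0 < ψ t}))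
    {x r K : ℝ} (hr : cdfFun μ r = cdfFun μ x + K) {u : ℝ} (hu : u ∈ Ioo 0 K) :
    HasDerivAt (fun w => cdfInv μ (cdfFun μ x + w))
      (ψ (cdfInv μ (cdfFun μ x + u)))⁻¹ u := by
  set U := interior {t : ℝ | 0 < ψ t} with hUdef
  set g : ℝ → ℝ := fun w => cdfInv μ (cdfFun μ x + w) with hgdef
  set z := g u with hzdef
  obtain ⟨hΦz, _, _, hzU⟩ := quantile_props hψpos hμ hconv hr hu
  have hgcont : ContinuousAt g u := by
    rw [Metric.continuousAt_iff]
    intro ε hε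
    obtain ⟨ρ, hρpos, hball⟩ := Metric.isOpen_iff.mp isOpen_interior z hzU
    set ε' := min (ε/2) (ρ/2) with hε'def
    have hε'pos : 0 < ε' := lt_min (by linarith) (by linarith)
    have hIcc : Icc (z - ε') (z + ε') ⊆ U := by
      intro w hw
      apply hball
      rw [Metric.mem_ball, Real.dist_eq, abs_lt]
      have h1 := hw.1; have h2 := hw.2
      have : ε' ≤ ρ/2 := min_le_right _ _
      constructor <;> linarith
    have hδ₁ : 0 < cdfFun μ (z + ε') - cdfFun μ z := by
      have := cdfFun_strict hψpos hμ hcont (show z < z + ε' by linarith)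
        (fun w hw => hIcc ⟨by linarith [hw.1, hε'pos], hw.2⟩)
      linarith
    have hδ₂ : 0 < cdfFun μ z - cdfFun μ (z - ε') := by
      have := cdfFun_strict hψpos hμ hcont (show z - ε' < z by linarith)
        (fun w hw => hIcc ⟨hw.1, by linarith [hw.2, hε'pos]⟩)
      linarith
    refine ⟨min (min (cdfFun μ (z + ε') - cdfFun μ z) (cdfFun μ z - cdfFun μ (z - ε')))
      (min u (K - u)), lt_min (lt_min hδ₁ hδ₂) (lt_min hu.1 (by linarith [hu.2])), ?_⟩
    intro y hy
    rw [Real.dist_eq] at hy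
    have hy1 : |y - u| < min (cdfFun μ (z + ε') - cdfFun μ z) (cdfFun μ z - cdfFun μ (z - ε')) :=
      lt_of_lt_of_le hy (min_le_left _ _)
    have hy2 : |y - u| < min u (K - u) := lt_of_lt_of_le hy (min_le_right _ _)
    rw [abs_lt] at hy1 hy2
    have hm1 : u ⊓ (K - u) ≤ u := min_le_left _ _
    have hm2 : u ⊓ (K - u) ≤ K - u := min_le_right _ _
    have hm3 : (cdfFun μ (z + ε') - cdfFun μ z) ⊓ (cdfFun μ z - cdfFun μ (z - ε'))
        ≤ cdfFun μ (z + ε') - cdfFun μ z := min_le_left _ _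
    have hm4 : (cdfFun μ (z + ε') - cdfFun μ z) ⊓ (cdfFun μ z - cdfFun μ (z - ε'))
        ≤ cdfFun μ z - cdfFun μ (z - ε') := min_le_right _ _
    have hyIoo : y ∈ Ioo 0 K := ⟨by linarith [hy2.1], by linarith [hy2.2]⟩
    obtain ⟨hΦgy, _, _, _⟩ := quantile_props hψpos hμ hconv hr hyIoo
    have hdiff : cdfFun μ (g y) - cdfFun μ z = y - u := by
      rw [hΦgy, hΦz]; ring
    have hub : g y < z + ε' := by
      by_contra hc
      push_neg at hc
      have := cdfFun_mono μ hc
      linarith [hy1.2]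
    have hlb : z - ε' < g y := by
      by_contra hc
      push_neg at hc
      have := cdfFun_mono μ hc
      linarith [hy1.1]
    rw [Real.dist_eq, abs_lt]
    have : ε' ≤ ε/2 := min_le_left _ _
    constructor <;> linarith
  have hΦderiv : HasDerivAt (fun s => cdfFun μ s - cdfFun μ x) (ψ z) z :=
    (hasDerivAt_cdfFun hψpos hμ hcont hzU).sub_const _
  have hψzne : ψ z ≠ 0 := by
    have h0 : z ∈ {t : ℝ | 0 < ψ t} := interior_subset hzU
    exact ne_of_gt h0
  have hfg : ∀ᶠ y in nhds u, (fun s => cdfFun μ s - cdfFun μ x) (g y) = y := by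
    filter_upwards [Ioo_mem_nhds hu.1 hu.2] with y hy
    obtain ⟨hΦgy, _, _, _⟩ := quantile_props hψpos hμ hconv hr hy
    simp only [hgdef, hΦgy]; ring
  exact HasDerivAt.of_local_left_inverse hgcont hΦderiv hψzne hfg
end gderiv

section borell
variable {μ : Measure ℝ} [IsProbabilityMeasure μ] {ψ : ℝ → ℝ}

lemma borell_interval (hψpos : ∀ t, 0 ≤ ψ t)
    (hμ : μ = volume.withDensity (fun t => ENNReal.ofReal (ψ t)))
    (hconv : ConvexOn ℝ {t : ℝ | 0 < ψ t} (fun t => (ψ t)⁻¹))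
    {x₁ r₁ x₂ r₂ K lam : ℝ} (hlam : lam ∈ Icc (0:ℝ) 1) (hK : 0 < K)
    (h₁ : cdfFun μ r₁ = cdfFun μ x₁ + K) (h₂ : cdfFun μ r₂ = cdfFun μ x₂ + K) :
    cdfFun μ ((1-lam)*x₁ + lam*x₂) + K ≤ cdfFun μ ((1-lam)*r₁ + lam*r₂) := by
  haveI : NullSingletonClass μ := noAtoms_of_density hμ
  have hcont : ContinuousOn ψ (interior {t : ℝ | 0 < ψ t}) := continuousOn_psi hconv
  have hlam0 : 0 ≤ lam := hlam.1
  have hlam1 : 0 ≤ 1 - lam := by linarith [hlam.2]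
  set U := interior {t : ℝ | 0 < ψ t} with hUdef
  have hUconv : Convex ℝ U := hconv.1.interior
  set g₁ : ℝ → ℝ := fun w => cdfInv μ (cdfFun μ x₁ + w) with hg₁def
  set g₂ : ℝ → ℝ := fun w => cdfInv μ (cdfFun μ x₂ + w) with hg₂def
  set h : ℝ → ℝ := fun w => (1-lam) * g₁ w + lam * g₂ w with hhdef
  set v : ℝ → ℝ := fun w => cdfFun μ (h w) - w with hvdef
  have hhU : ∀ u ∈ Ioo (0:ℝ) K, h u ∈ U := by
    intro u hu
    obtain ⟨_, _, _, hU₁⟩ := quantile_props hψpos hμ hconv h₁ hu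
    obtain ⟨_, _, _, hU₂⟩ := quantile_props hψpos hμ hconv h₂ hu
    have := hUconv hU₁ hU₂ hlam1 hlam0 (by ring)
    simpa [smul_eq_mul] using this
  have hd : ∀ u ∈ Ioo (0:ℝ) K, HasDerivAt v
      (ψ (h u) * ((1-lam) * (ψ (g₁ u))⁻¹ + lam * (ψ (g₂ u))⁻¹) - 1) u := by
    intro u hu
    have hd₁ := quantile_hasDerivAt hψpos hμ hconv hcont h₁ hu
    have hd₂ := quantile_hasDerivAt hψpos hμ hconv hcont h₂ hu
    have hh : HasDerivAt h ((1-lam) * (ψ (g₁ u))⁻¹ + lam * (ψ (g₂ u))⁻¹) u :=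
      (hd₁.const_mul (1-lam)).add (hd₂.const_mul lam)
    have hΦ : HasDerivAt (cdfFun μ) (ψ (h u)) (h u) :=
      hasDerivAt_cdfFun hψpos hμ hcont (hhU u hu)
    have := (hΦ.comp u hh).sub (hasDerivAt_id u)
    exact this.congr_deriv (by ring)
  have hnonneg : ∀ u ∈ Ioo (0:ℝ) K,
      0 ≤ ψ (h u) * ((1-lam) * (ψ (g₁ u))⁻¹ + lam * (ψ (g₂ u))⁻¹) - 1 := by
    intro u hu
    obtain ⟨_, _, _, hU₁⟩ := quantile_props hψpos hμ hconv h₁ hu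
    obtain ⟨_, _, _, hU₂⟩ := quantile_props hψpos hμ hconv h₂ hu
    have hψh : (0:ℝ) < ψ (h u) := by
      have hm : h u ∈ {t : ℝ | 0 < ψ t} := interior_subset (hhU u hu)
      exact hm
    have hharm : (ψ (h u))⁻¹ ≤ (1-lam) * (ψ (g₁ u))⁻¹ + lam * (ψ (g₂ u))⁻¹ := by
      have := hconv.2 (interior_subset hU₁) (interior_subset hU₂) hlam1 hlam0 (by ring)
      simpa [smul_eq_mul] using this
    have hmul := mul_le_mul_of_nonneg_left hharm hψh.le
    rw [mul_inv_cancel₀ (ne_of_gt hψh)] at hmul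
    linarith
  have hvmono : MonotoneOn v (Ioo 0 K) := by
    apply monotoneOn_of_deriv_nonneg (convex_Ioo 0 K)
    · intro u hu
      exact ((hd u hu).continuousAt).continuousWithinAt
    · intro u hu
      rw [interior_Ioo] at hu
      exact ((hd u hu).differentiableAt).differentiableWithinAt
    · intro u hu
      rw [interior_Ioo] at hu
      rw [(hd u hu).deriv]
      exact hnonneg u hu
  have key : ∀ ε : ℝ, 0 < ε → ε < K/2 →
      cdfFun μ ((1-lam)*x₁ + lam*x₂) + K - 2*ε ≤ cdfFun μ ((1-lam)*r₁ + lam*r₂) := by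
    intro ε hε hεK
    have hu₁ : ε ∈ Ioo (0:ℝ) K := ⟨hε, by linarith⟩
    have hu₂ : K - ε ∈ Ioo (0:ℝ) K := ⟨by linarith, by linarith⟩
    have hv12 := hvmono hu₁ hu₂ (by linarith)
    obtain ⟨_, hle₁, hgt₁, _⟩ := quantile_props hψpos hμ hconv h₁ hu₁
    obtain ⟨_, hle₂, hgt₂, _⟩ := quantile_props hψpos hμ hconv h₂ hu₁
    obtain ⟨_, hle₁', hgt₁', _⟩ := quantile_props hψpos hμ hconv h₁ hu₂
    obtain ⟨_, hle₂', hgt₂', _⟩ := quantile_props hψpos hμ hconv h₂ hu₂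
    have hch : (1-lam)*x₁ + lam*x₂ ≤ h ε := by
      have a1 : (1-lam)*x₁ ≤ (1-lam)*(g₁ ε) := mul_le_mul_of_nonneg_left hgt₁.le hlam1
      have a2 : lam*x₂ ≤ lam*(g₂ ε) := mul_le_mul_of_nonneg_left hgt₂.le hlam0
      simpa [hhdef] using add_le_add a1 a2
    have hhm : h (K - ε) ≤ (1-lam)*r₁ + lam*r₂ := by
      have a1 : (1-lam)*(g₁ (K-ε)) ≤ (1-lam)*r₁ := mul_le_mul_of_nonneg_left hle₁' hlam1
      have a2 : lam*(g₂ (K-ε)) ≤ lam*r₂ := mul_le_mul_of_nonneg_left hle₂' hlam0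
      simpa [hhdef] using add_le_add a1 a2
    have m1 := cdfFun_mono μ hch
    have m2 := cdfFun_mono μ hhm
    have hv12' : cdfFun μ (h ε) - ε ≤ cdfFun μ (h (K - ε)) - (K - ε) := hv12
    linarith
  by_contra hcon
  push_neg at hcon
  set d := cdfFun μ ((1-lam)*x₁ + lam*x₂) + K - cdfFun μ ((1-lam)*r₁ + lam*r₂) with hddef
  have hd0 : 0 < d := by simp only [hddef]; linarith
  have hε : 0 < min (d/3) (K/3) := lt_min (by linarith) (by linarith)
  have hεK : min (d/3) (K/3) < K/2 := lt_of_le_of_lt (min_le_right _ _) (by linarith)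
  have := key _ hε hεK
  have h3 : min (d/3) (K/3) ≤ d/3 := min_le_left _ _
  linarith
end borell

/-- Ehrhard-type (Brunn-Minkowski-type) inequality for the CDF of a convex probability
measure on `ℝ`: for `a ≤ β_μ`, `r, t ∈ (max{a, α_μ}, β_μ)` and `λ ∈ [0,1]`,
`μ((a, (1−λ)r + λt]) ≥ Φ_μ((1−λ)Φ_μ⁻¹(μ((a,r])) + λ Φ_μ⁻¹(μ((a,t])))`. -/
theorem stmt_3 (μ : Measure ℝ) [IsProbabilityMeasure μ] (ψ : ℝ → ℝ)
    (hψpos : ∀ t, 0 ≤ ψ t)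
    (hμ : μ = volume.withDensity (fun t => ENNReal.ofReal (ψ t)))
    (hconvexmeasure : ConvexOn ℝ {t : ℝ | 0 < ψ t} (fun t => (ψ t)⁻¹))
    (hbar : Integrable (fun r : ℝ => r) μ)
    (a r t : ℝ) (lam : ℝ) (hlam : lam ∈ Icc (0:ℝ) 1)
    -- `a ≤ β_μ`:
    (ha : ∀ s < a, cdfFun μ s < 1)
    -- `r ∈ (max{a, α_μ}, β_μ)`:
    (hr₁ : 0 < (μ (Ioc a r)).toReal) (hr₂ : ∃ s, r < s ∧ cdfFun μ s < 1)
    -- `t ∈ (max{a, α_μ}, β_μ)`: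
    (ht₁ : 0 < (μ (Ioc a t)).toReal) (ht₂ : ∃ s, t < s ∧ cdfFun μ s < 1) :
    cdfFun μ ((1 - lam) * cdfInv μ ((μ (Ioc a r)).toReal)
        + lam * cdfInv μ ((μ (Ioc a t)).toReal))
      ≤ (μ (Ioc a ((1 - lam) * r + lam * t))).toReal := by
  haveI : NullSingletonClass μ := noAtoms_of_density hμ
  have har : a < r := by
    by_contra hc
    push_neg at hc
    rw [Ioc_eq_empty (not_lt.mpr hc)] at hr₁
    simp at hr₁
  have hat : a < t := by
    by_contra hc
    push_neg at hc
    rw [Ioc_eq_empty (not_lt.mpr hc)] at ht₁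
    simp at ht₁
  have hyr : (μ (Ioc a r)).toReal = cdfFun μ r - cdfFun μ a := measure_Ioc_toReal μ a r har.le
  have hyt : (μ (Ioc a t)).toReal = cdfFun μ t - cdfFun μ a := measure_Ioc_toReal μ a t hat.le
  have hyr' : (μ (Ioc a r)).toReal ≤ cdfFun μ r := by
    rw [hyr]; linarith [cdfFun_nonneg μ a]
  have hyt' : (μ (Ioc a t)).toReal ≤ cdfFun μ t := by
    rw [hyt]; linarith [cdfFun_nonneg μ a]
  obtain ⟨hxr, hxr_le⟩ := cdfInv_spec μ hr₁ hyr'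
  obtain ⟨hxt, hxt_le⟩ := cdfInv_spec μ ht₁ hyt'
  set xr := cdfInv μ ((μ (Ioc a r)).toReal) with hxrdef
  set xt := cdfInv μ ((μ (Ioc a t)).toReal) with hxtdef
  have hlam0 : 0 ≤ lam := hlam.1
  have hlam1 : 0 ≤ 1 - lam := by linarith [hlam.2]
  have ham : a ≤ (1 - lam) * r + lam * t := by nlinarith
  have hm : (μ (Ioc a ((1 - lam) * r + lam * t))).toReal
      = cdfFun μ ((1 - lam) * r + lam * t) - cdfFun μ a := measure_Ioc_toReal μ _ _ ham
  rw [hm]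
  rcases eq_or_lt_of_le (cdfFun_nonneg μ a) with hK0 | hKpos
  · -- Φ a = 0
    have hc : (1 - lam) * xr + lam * xt ≤ (1 - lam) * r + lam * t := by
      have a1 : (1-lam)*xr ≤ (1-lam)*r := mul_le_mul_of_nonneg_left hxr_le hlam1
      have a2 : lam*xt ≤ lam*t := mul_le_mul_of_nonneg_left hxt_le hlam0
      linarith
    have := cdfFun_mono μ hc
    linarith [this]
  · have hb := borell_interval hψpos hμ hconvexmeasure hlam hKpos
      (x₁ := xr) (r₁ := r) (x₂ := xt) (r₂ := t)
      (by rw [hxr, hyr]; ring) (by rw [hxt, hyt]; ring)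
    linarith [hb]
end

section
/- Let s ∈ (-1, 0) and μ an s-concave probability measure on ℝⁿ with barycenter g_μ. For any unit vector u and H⁻ = {x : ⟨x,u⟩ ≤ ⟨g_μ,u⟩}, one has μ(H⁻) ≥ (1/(1+s))^{1/s}. -/
open MeasureTheory Set Pointwise
open scoped RealInnerProductSpace

namespace Grunbaum13

open Real Filter Topology

lemma shift_Ioi (f : ℝ → ℝ) (a d : ℝ) :
    (∫ x in Ioi a, f (x + d)) = ∫ x in Ioi (a + d), f x := by
  have A : MeasurableEmbedding (fun x : ℝ => x + d) :=
    (Homeomorph.addRight d).isClosedEmbedding.measurableEmbedding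
  have h1 : (∫ x in Ioi (a + d), f x)
      = ∫ x in Ioi (a + d), f x ∂(Measure.map (fun x : ℝ => x + d) volume) := by
    rw [map_add_right_eq_self]
  rw [h1, A.setIntegral_map]
  congr 1
  ext x
  simp

lemma shift_Ioi_integrableOn {f : ℝ → ℝ} {a d : ℝ} (h : IntegrableOn f (Ioi (a + d))) :
    IntegrableOn (fun x => f (x + d)) (Ioi a) := by
  have A : MeasurableEmbedding (fun x : ℝ => x + d) :=
    (Homeomorph.addRight d).isClosedEmbedding.measurableEmbedding
  rw [← map_add_right_eq_self (volume : Measure ℝ) d] at h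
  have := A.integrableOn_map_iff.mp h
  simpa [Function.comp_def] using this

set_option maxHeartbeats 2000000 in
theorem onedim (s : ℝ) (hs1 : -1 < s) (hs0 : s < 0) (ν : Measure ℝ) [IsProbabilityMeasure ν]
    (hG : ∀ t t' : ℝ, 0 < ν (Iic t) → 0 < ν (Iic t') → ∀ lam ∈ Icc (0:ℝ) 1,
        ((1 - lam) * (ν (Iic t)).toReal ^ s + lam * (ν (Iic t')).toReal ^ s) ^ (1 / s)
          ≤ (ν (Iic ((1 - lam) * t + lam * t'))).toReal)
    (hint : Integrable (fun x : ℝ => x) ν) {m : ℝ} (hm : m = ∫ x, x ∂ν) :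
    (1 / (1 + s)) ^ (1 / s) ≤ (ν (Iic m)).toReal := by
  have hs0' : s ≠ 0 := ne_of_lt hs0
  have h1s : 0 < 1 + s := by linarith
  have hσlt : 1 / s < -1 := by
    rw [div_lt_iff_of_neg hs0]
    linarith
  set F : ℝ → ℝ := fun t => (ν (Iic t)).toReal with hFdef
  set c : ℝ := (1 / (1 + s)) ^ (1 / s) with hcdef
  show c ≤ F m
  have hbase : 1 < 1 / (1 + s) := one_lt_one_div h1s (by linarith)
  have hc0 : 0 < c := rpow_pos_of_pos (by positivity) _
  have hc1 : c < 1 := rpow_lt_one_of_one_lt_of_neg hbase (by linarith)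
  have hcs : c ^ s = 1 / (1 + s) := by
    rw [hcdef, ← Real.rpow_mul (by positivity), one_div_mul_cancel hs0', Real.rpow_one]
  have hFmono : Monotone F := by
    intro t t' h
    exact ENNReal.toReal_mono (measure_ne_top ν _) (measure_mono (Iic_subset_Iic.mpr h))
  have hFnn : ∀ t, 0 ≤ F t := fun t => ENNReal.toReal_nonneg
  have hFle1 : ∀ t, F t ≤ 1 := by
    intro t
    have := ENNReal.toReal_mono (by simp) (prob_le_one (μ := ν) (s := Iic t))
    simpa using this
  -- convexity of F^s on {F > 0}
  have hGc : ∀ t t' : ℝ, 0 < F t → 0 < F t' → ∀ lam ∈ Icc (0:ℝ) 1,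
      F ((1 - lam) * t + lam * t') ^ s ≤ (1 - lam) * F t ^ s + lam * F t' ^ s := by
    intro t t' ht ht' lam hlam
    have hν1 : 0 < ν (Iic t) := by
      rcases eq_or_ne (ν (Iic t)) 0 with h | h
      · rw [hFdef] at ht; simp [h] at ht
      · exact pos_iff_ne_zero.mpr h
    have hν2 : 0 < ν (Iic t') := by
      rcases eq_or_ne (ν (Iic t')) 0 with h | h
      · rw [hFdef] at ht'; simp [h] at ht'
      · exact pos_iff_ne_zero.mpr h
    have key := hG t t' hν1 hν2 lam hlam
    have hXpos : 0 < (1 - lam) * F t ^ s + lam * F t' ^ s := by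
      rcases lt_or_eq_of_le hlam.2 with h | h
      · have h1 : 0 < (1 - lam) * F t ^ s := mul_pos (by linarith) (rpow_pos_of_pos ht s)
        have h2 : 0 ≤ lam * F t' ^ s := mul_nonneg hlam.1 (rpow_pos_of_pos ht' s).le
        linarith
      · have h1 : 0 < lam * F t' ^ s := by
          rw [h]; simpa using rpow_pos_of_pos ht' s
        have h2 : 0 ≤ (1 - lam) * F t ^ s :=
          mul_nonneg (by linarith) (rpow_pos_of_pos ht s).le
        linarith
    have h2 : ((1 - lam) * F t ^ s + lam * F t' ^ s) ^ (1 / s)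
        ≤ F ((1 - lam) * t + lam * t') := key
    have h4 : F ((1 - lam) * t + lam * t') ^ s
        ≤ (((1 - lam) * F t ^ s + lam * F t' ^ s) ^ (1 / s)) ^ s :=
      rpow_le_rpow_of_nonpos (rpow_pos_of_pos hXpos _) h2 hs0.le
    rwa [← Real.rpow_mul hXpos.le, one_div_mul_cancel hs0', Real.rpow_one] at h4
  set I : Set ℝ := {t : ℝ | 0 < F t} with hIdef
  have hIup : ∀ {t t' : ℝ}, t ∈ I → t ≤ t' → t' ∈ I := by
    intro t t' ht h
    exact lt_of_lt_of_le ht (hFmono h)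
  have hIconv : Convex ℝ I := by
    rw [convex_iff_ordConnected]
    exact ⟨fun x hx y hy z hz => hIup hx hz.1⟩
  have hGconv : ConvexOn ℝ I (fun t => F t ^ s) := by
    refine ⟨hIconv, ?_⟩
    intro x hx y hy p b hp hb hab
    have h := hGc x y hx hy b ⟨hb, by linarith⟩
    have hab' : 1 - b = p := by linarith
    rw [hab'] at h
    simpa using h
  by_cases hFm : c ≤ F m
  · exact hFm
  push_neg at hFm
  exfalso
  set S : Set ℝ := {t : ℝ | c ≤ F t} with hSdef
  have hex : ∃ r : ℝ, c < F r := by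
    by_contra h
    push_neg at h
    have hmo : Monotone (fun k : ℕ => Iic (k : ℝ)) := by
      intro i j hij
      exact Iic_subset_Iic.mpr (by exact_mod_cast hij)
    have h1 := tendsto_measure_iUnion_atTop (μ := ν) hmo
    have hU : ⋃ k : ℕ, Iic (k : ℝ) = univ := by
      ext x
      simp only [mem_iUnion, mem_Iic, mem_univ, iff_true]
      exact exists_nat_ge x
    rw [hU, measure_univ] at h1
    have h2 : Tendsto (fun k : ℕ => F (k : ℝ)) atTop (𝓝 1) := by
      have := (ENNReal.tendsto_toReal (a := 1) (by simp)).comp h1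
      exact this
    have h3 : (1 : ℝ) ≤ c := le_of_tendsto h2 (Eventually.of_forall fun k => h _)
    exact absurd h3 (not_le.mpr hc1)
  obtain ⟨r₀, hr₀⟩ := hex
  have hSne : S.Nonempty := ⟨r₀, hr₀.le⟩
  have hSlb : ∀ t ∈ S, m < t := by
    intro t ht
    by_contra h
    push_neg at h
    exact absurd (le_trans ht (hFmono h)) (not_le.mpr hFm)
  have hSbdd : BddBelow S := ⟨m, fun t ht => (hSlb t ht).le⟩
  set a := sInf S with hadef
  have hlt : ∀ t, t < a → F t < c := by
    intro t h
    by_contra hh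
    push_neg at hh
    exact absurd (csInf_le hSbdd hh) (not_le.mpr h)
  have hFa_ge : c ≤ F a := by
    have hmono' : Antitone (fun k : ℕ => Iic (a + 1 / ((k : ℝ) + 1))) := by
      intro i j hij
      apply Iic_subset_Iic.mpr
      have h1 : (1 : ℝ) / ((j : ℝ) + 1) ≤ 1 / ((i : ℝ) + 1) := by
        apply one_div_le_one_div_of_le (by positivity)
        have : (i : ℝ) ≤ (j : ℝ) := by exact_mod_cast hij
        linarith
      linarith
    have hInter : ⋂ k : ℕ, Iic (a + 1 / ((k : ℝ) + 1)) = Iic a := by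
      ext x
      simp only [mem_iInter, mem_Iic]
      constructor
      · intro h
        by_contra hx
        push_neg at hx
        obtain ⟨k, hk⟩ := exists_nat_one_div_lt (sub_pos.mpr hx)
        have := h k
        linarith
      · intro h k
        have : 0 < 1 / ((k : ℝ) + 1) := by positivity
        linarith
    have h1 := tendsto_measure_iInter_atTop (μ := ν)
      (fun k => measurableSet_Iic.nullMeasurableSet) hmono' ⟨0, measure_ne_top ν _⟩
    rw [hInter] at h1
    have h2 : Tendsto (fun k : ℕ => F (a + 1 / ((k : ℝ) + 1))) atTop (𝓝 (F a)) := by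
      have := (ENNReal.tendsto_toReal (measure_ne_top ν (Iic a))).comp h1
      exact this
    apply ge_of_tendsto h2
    apply Eventually.of_forall
    intro k
    have hlt' : sInf S < a + 1 / ((k : ℝ) + 1) := by
      have : 0 < 1 / ((k : ℝ) + 1) := by positivity
      rw [← hadef]; linarith
    obtain ⟨t, htS, htlt⟩ := exists_lt_of_csInf_lt hSne hlt'
    exact le_trans htS (hFmono htlt.le)
  by_cases hB1 : ∀ t, t < a → F t = 0
  · -- measure concentrated on [a, ∞)
    have hnull : ν (Iio a) = 0 := by
      have hUn : Iio a = ⋃ k : ℕ, Iic (a - 1 / ((k : ℝ) + 1)) := by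
        ext x
        simp only [mem_Iio, mem_iUnion, mem_Iic]
        constructor
        · intro h
          obtain ⟨k, hk⟩ := exists_nat_one_div_lt (sub_pos.mpr h)
          exact ⟨k, by linarith⟩
        · rintro ⟨k, hk⟩
          have : 0 < 1 / ((k : ℝ) + 1) := by positivity
          linarith
      rw [hUn]
      apply measure_iUnion_null
      intro k
      have hk : a - 1 / ((k : ℝ) + 1) < a := by
        have : 0 < 1 / ((k : ℝ) + 1) := by positivity
        linarith
      have h0 := hB1 _ hk
      rcases (ENNReal.toReal_eq_zero_iff _).mp h0 with h | h
      · exact h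
      · exact absurd h (measure_ne_top ν _)
    have hae : ∀ᵐ x ∂ν, a ≤ x := by
      have hset : {x : ℝ | ¬ a ≤ x} = Iio a := by ext x; simp [not_le]
      rw [ae_iff, hset]
      exact hnull
    have hma : a ≤ m := by
      rw [hm]
      have h1 : a = ∫ _x, a ∂ν := by simp
      rw [h1]
      exact integral_mono_ae (integrable_const a) hint hae
    exact absurd (le_trans hFa_ge (hFmono hma)) (not_le.mpr hFm)
  push_neg at hB1
  obtain ⟨t₀, ht₀a, ht₀ne⟩ := hB1
  have ht₀pos : (0:ℝ) < F t₀ := lt_of_le_of_ne (hFnn t₀) (Ne.symm ht₀ne)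
  have haI : a ∈ I := lt_of_lt_of_le hc0 hFa_ge
  have hsubI : Ioi t₀ ⊆ I := fun x hx => hIup (show t₀ ∈ I from ht₀pos) (le_of_lt hx)
  have haint : a ∈ interior I := interior_maximal hsubI isOpen_Ioi ht₀a
  -- F a = c
  have hFa_le : F a ≤ c := by
    have hGcont : ContinuousOn (fun t => F t ^ s) (interior I) := hGconv.continuousOn_interior
    have hca : ContinuousAt (fun t => F t ^ s) a :=
      hGcont.continuousAt (isOpen_interior.mem_nhds haint)
    have hFcont : ContinuousAt F a := by
      have h1 : ContinuousAt (fun t => (F t ^ s) ^ (1 / s)) a := by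
        apply ContinuousAt.rpow_const hca
        left
        exact ne_of_gt (rpow_pos_of_pos (show 0 < F a from haI) s)
      apply h1.congr
      filter_upwards [isOpen_Ioi.mem_nhds ht₀a] with t ht
      have htI : 0 < F t := hsubI ht
      rw [← Real.rpow_mul (hFnn t), mul_one_div_cancel hs0', Real.rpow_one]
    have hten : Tendsto F (𝓝[<] a) (𝓝 (F a)) := hFcont.tendsto.mono_left nhdsWithin_le_nhds
    apply le_of_tendsto hten
    filter_upwards [self_mem_nhdsWithin] with t ht
    exact (hlt t ht).le
  have hFa : F a = c := le_antisymm hFa_le hFa_ge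
  set γ : ℝ := 1 / (1 + s) with hγdef
  have hγ : F a ^ s = γ := by rw [hFa]; exact hcs
  have hγ1 : 1 < γ := hbase
  have hγ0 : 0 < γ := lt_trans one_pos hγ1
  set G : ℝ → ℝ := fun t => F t ^ s with hGdef
  -- slopes and subgradient
  set R : Set ℝ := (fun r => (G r - G a) / (r - a)) '' Ioi a with hRdef
  have hRne : R.Nonempty := ⟨_, mem_image_of_mem _ (mem_Ioi.mpr (lt_add_one a))⟩
  have hlbR : ∀ x ∈ R, (G a - G t₀) / (a - t₀) ≤ x := by
    rintro x ⟨r, hr, rfl⟩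
    exact hGconv.slope_mono_adjacent (show t₀ ∈ I from ht₀pos) (hIup haI (le_of_lt hr)) ht₀a hr
  have hRbdd : BddBelow R := ⟨_, hlbR⟩
  set β := sInf R with hβdef
  have hβle : ∀ r, a < r → β ≤ (G r - G a) / (r - a) :=
    fun r hr => csInf_le hRbdd (mem_image_of_mem _ hr)
  have hβge : ∀ t, t ∈ I → t < a → (G a - G t) / (a - t) ≤ β := by
    intro t ht hta
    apply le_csInf hRne
    rintro x ⟨r, hr, rfl⟩
    exact hGconv.slope_mono_adjacent ht (hIup haI hr.le) hta hr
  have hβneg : β < 0 := by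
    set r := max r₀ (a + 1) with hrdef
    have hra : a < r := lt_of_lt_of_le (lt_add_one a) (le_max_right _ _)
    have hFr : c < F r := lt_of_lt_of_le hr₀ (hFmono (le_max_left _ _))
    have hGr : G r < G a := by
      have h := Real.rpow_lt_rpow_of_neg hc0 hFr hs0
      calc G r = F r ^ s := rfl
        _ < c ^ s := h
        _ = F a ^ s := by rw [hFa]
        _ = G a := rfl
    have hslope : (G r - G a) / (r - a) < 0 :=
      div_neg_of_neg_of_pos (by linarith) (by linarith)
    exact lt_of_le_of_lt (hβle r hra) hslope
  set B := -β with hBdef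
  have hBpos : 0 < B := by rw [hBdef]; linarith
  have hGaγ : G a = γ := hγ
  have hsub_left : ∀ t, 0 < F t → t < a → γ + B * (a - t) ≤ G t := by
    intro t ht hta
    have h := hβge t ht hta
    have h2 : G a - G t ≤ β * (a - t) := (div_le_iff₀ (by linarith)).mp h
    have hBβ : B = -β := hBdef
    nlinarith [h2]
  have hsub_right : ∀ t, a < t → γ - B * (t - a) ≤ G t := by
    intro t hta
    have h := hβle t hta
    have h2 : β * (t - a) ≤ G t - G a := (le_div_iff₀ (by linarith)).mp h
    have hBβ : B = -β := hBdef
    nlinarith [h2]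
  -- layer cake
  set p : ℝ → ℝ := fun x => max (x - a) 0 with hpdef
  set q : ℝ → ℝ := fun x => max (a - x) 0 with hqdef
  have hp_int : Integrable p ν := (hint.sub (integrable_const a)).pos_part
  have hq_int : Integrable q ν := ((integrable_const a).sub hint).pos_part
  have hpq : ∀ x, p x - q x = x - a := by
    intro x
    have : a - x = -(x - a) := by ring
    rw [hpdef, hqdef]
    simp only [this]
    exact max_zero_sub_max_neg_zero_eq_self _
  have hma : m - a = (∫ x, p x ∂ν) - ∫ x, q x ∂ν := by
    rw [← integral_sub hp_int hq_int]
    have : (∫ x, (p x - q x) ∂ν) = ∫ x, (x - a) ∂ν := by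
      apply integral_congr_ae
      exact Eventually.of_forall fun x => hpq x
    rw [this, integral_sub hint (integrable_const a), integral_const, probReal_univ, hm]
    simp
  have hP := hp_int.integral_eq_integral_meas_lt
    (Eventually.of_forall fun x => le_max_right _ _)
  have hQ := hq_int.integral_eq_integral_meas_lt
    (Eventually.of_forall fun x => le_max_right _ _)
  have hPsets : ∀ t : ℝ, 0 < t → {x : ℝ | t < p x} = Ioi (a + t) := by
    intro t ht
    ext x
    simp only [mem_setOf_eq, mem_Ioi, hpdef, lt_max_iff]
    constructor
    · rintro (h | h)
      · linarith
      · linarith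
    · intro h; left; linarith
  have hQsets : ∀ t : ℝ, 0 < t → {x : ℝ | t < q x} = Iio (a - t) := by
    intro t ht
    ext x
    simp only [mem_setOf_eq, mem_Iio, hqdef, lt_max_iff]
    constructor
    · rintro (h | h)
      · linarith
      · linarith
    · intro h; left; linarith
  set σ := 1 / s with hσdef
  have hκneg : σ + 1 < 0 := by linarith
  have hκne : σ + 1 ≠ 0 := ne_of_lt hκneg
  -- the dominating function for Q side
  have hφ_int : IntegrableOn (fun t : ℝ => (γ + B * t) ^ σ) (Ioi 0) := by
    have h1 : IntegrableOn (fun x : ℝ => x ^ σ) (Ioi γ) := integrableOn_Ioi_rpow_of_lt hσlt hγ0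
    have h2 : IntegrableOn (fun x : ℝ => (x + γ) ^ σ) (Ioi 0) := by
      apply shift_Ioi_integrableOn (f := fun x : ℝ => x ^ σ) (a := 0) (d := γ)
      simpa using h1
    have h3 := (integrableOn_Ioi_comp_mul_left_iff (fun x : ℝ => (x + γ) ^ σ) 0 hBpos).mpr
      (by simpa using h2)
    apply h3.congr_fun _ measurableSet_Ioi
    intro x _
    ring_nf
  have hφ_val : (∫ t in Ioi (0:ℝ), (γ + B * t) ^ σ) = -γ ^ (σ + 1) / ((σ + 1) * B) := by
    have h1 : (∫ t in Ioi (0:ℝ), (γ + B * t) ^ σ)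
        = ∫ t in Ioi (0:ℝ), (fun x : ℝ => (x + γ) ^ σ) (B * t) := by
      apply setIntegral_congr_fun measurableSet_Ioi
      intro x _
      simp only []
      ring_nf
    have h2 := integral_comp_mul_left_Ioi (fun x : ℝ => (x + γ) ^ σ) 0 hBpos
    rw [mul_zero] at h2
    have h3 : (∫ x in Ioi (0:ℝ), (x + γ) ^ σ) = ∫ x in Ioi ((0:ℝ) + γ), x ^ σ :=
      shift_Ioi (fun x : ℝ => x ^ σ) 0 γ
    rw [zero_add] at h3
    rw [h1, h2, h3, integral_Ioi_rpow_of_lt hσlt hγ0, smul_eq_mul,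
      inv_mul_eq_div, div_div]
  have hQle : (∫ t in Ioi (0:ℝ), (ν {x | t < q x}).toReal) ≤ -γ ^ (σ + 1) / ((σ + 1) * B) := by
    rw [← hφ_val]
    apply integral_mono_of_nonneg (Eventually.of_forall fun t => ENNReal.toReal_nonneg) hφ_int
    rw [EventuallyLE, ae_restrict_iff' measurableSet_Ioi]
    apply Eventually.of_forall
    intro t ht
    rw [mem_Ioi] at ht
    have hBt : 0 < γ + B * t := by
      have := mul_pos hBpos ht
      linarith
    rw [hQsets t ht]
    have h1 : (ν (Iio (a - t))).toReal ≤ F (a - t) :=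
      ENNReal.toReal_mono (measure_ne_top ν _) (measure_mono Iio_subset_Iic_self)
    rcases eq_or_lt_of_le (hFnn (a - t)) with h0 | h0
    · exact le_trans h1 (by rw [← h0]; exact rpow_nonneg hBt.le σ)
    · have hsub := hsub_left (a - t) h0 (by linarith)
      have h2 : γ + B * t ≤ F (a - t) ^ s := by
        have he : a - (a - t) = t := by ring
        calc γ + B * t = γ + B * (a - (a - t)) := by rw [he]
          _ ≤ G (a - t) := hsub
          _ = F (a - t) ^ s := rfl
      have h3 : F (a - t) = (F (a - t) ^ s) ^ σ := by
        rw [hσdef, ← Real.rpow_mul (hFnn _), mul_one_div_cancel hs0', Real.rpow_one]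
      calc (ν (Iio (a - t))).toReal ≤ F (a - t) := h1
        _ = (F (a - t) ^ s) ^ σ := h3
        _ ≤ (γ + B * t) ^ σ := rpow_le_rpow_of_nonpos hBt h2 (by linarith)
  set T := (γ - 1) / B with hTdef
  have hTpos : 0 < T := div_pos (by linarith) hBpos
  set ψ : ℝ → ℝ := fun t => 1 - (γ - B * t) ^ σ with hψdef
  have hγBt : ∀ t ∈ Icc (0:ℝ) T, 1 ≤ γ - B * t := by
    intro t ht
    have h2 : B * t ≤ B * T := mul_le_mul_of_nonneg_left ht.2 hBpos.le
    have h3 : B * T = γ - 1 := by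
      rw [hTdef]
      field_simp
    linarith
  have hψnn : ∀ t ∈ Icc (0:ℝ) T, 0 ≤ ψ t := by
    intro t ht
    have := rpow_le_one_of_one_le_of_nonpos (hγBt t ht) (by linarith : σ ≤ 0)
    simp only [hψdef]
    linarith
  have hPmeas : Measurable (fun t : ℝ => (ν {x | t < p x}).toReal) := by
    have hA : Antitone (fun t : ℝ => ν {x | t < p x}) := by
      intro t t' htt'
      exact measure_mono (fun x hx => lt_of_le_of_lt htt' hx)
    exact hA.measurable.ennreal_toReal
  have hPint : IntegrableOn (fun t : ℝ => (ν {x | t < p x}).toReal) (Ioi 0) := by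
    refine ⟨hPmeas.aestronglyMeasurable, ?_⟩
    have key : (∫⁻ ω, ENNReal.ofReal (p ω) ∂ν) = ∫⁻ t in Ioi (0:ℝ), ν {x | t < p x} :=
      lintegral_eq_lintegral_meas_lt ν
        (Eventually.of_forall fun x => le_max_right _ _) hp_int.aemeasurable
    have hfin : (∫⁻ t in Ioi (0:ℝ), ν {x | t < p x}) < ⊤ := by
      rw [← key]
      exact hp_int.lintegral_lt_top
    rw [hasFiniteIntegral_iff_ofReal (Eventually.of_forall fun t => ENNReal.toReal_nonneg)]
    calc (∫⁻ t in Ioi (0:ℝ), ENNReal.ofReal ((ν {x | t < p x}).toReal))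
        ≤ ∫⁻ t in Ioi (0:ℝ), ν {x | t < p x} :=
          lintegral_mono fun t => ENNReal.ofReal_toReal_le
      _ < ⊤ := hfin
  have hPlow : (∫ t in Ioi (0:ℝ), (Ioo (0:ℝ) T).indicator ψ t)
      ≤ ∫ t in Ioi (0:ℝ), (ν {x | t < p x}).toReal := by
    apply integral_mono_of_nonneg ?_ hPint ?_
    · apply Eventually.of_forall
      intro t
      by_cases ht : t ∈ Ioo (0:ℝ) T
      · rw [Pi.zero_apply, indicator_of_mem ht]
        exact hψnn t ⟨ht.1.le, ht.2.le⟩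
      · rw [Pi.zero_apply, indicator_of_notMem ht]
    · rw [EventuallyLE, ae_restrict_iff' measurableSet_Ioi]
      apply Eventually.of_forall
      intro t ht
      rw [mem_Ioi] at ht
      by_cases htT : t ∈ Ioo (0:ℝ) T
      · rw [indicator_of_mem htT, hPsets t ht]
        have hν_Ioi : (ν (Ioi (a + t))).toReal = 1 - F (a + t) := by
          have h1 : Ioi (a + t) = (Iic (a + t))ᶜ := compl_Iic.symm
          rw [h1, measure_compl measurableSet_Iic (measure_ne_top ν _), measure_univ,
            ENNReal.toReal_sub_of_le prob_le_one ENNReal.one_ne_top, ENNReal.toReal_one]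
        rw [hν_Ioi]
        have h1 : 1 ≤ γ - B * t := hγBt t ⟨htT.1.le, htT.2.le⟩
        have hpos : 0 < γ - B * t := by linarith
        have hsub := hsub_right (a + t) (by linarith [htT.1])
        have h2 : γ - B * t ≤ F (a + t) ^ s := by
          have he : a + t - a = t := by ring
          calc γ - B * t = γ - B * (a + t - a) := by rw [he]
            _ ≤ G (a + t) := hsub
            _ = F (a + t) ^ s := rfl
        have h3 : F (a + t) = (F (a + t) ^ s) ^ σ := by
          rw [hσdef, ← Real.rpow_mul (hFnn _), mul_one_div_cancel hs0', Real.rpow_one]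
        have h4 : F (a + t) ≤ (γ - B * t) ^ σ := by
          rw [h3]
          exact rpow_le_rpow_of_nonpos hpos h2 (by linarith)
        simp only [hψdef]
        linarith
      · rw [indicator_of_notMem htT]
        exact ENNReal.toReal_nonneg
  have hψval : (∫ t in Ioi (0:ℝ), (Ioo (0:ℝ) T).indicator ψ t)
      = T - (γ ^ (σ + 1) - 1) / ((σ + 1) * B) := by
    rw [integral_indicator measurableSet_Ioo, Measure.restrict_restrict measurableSet_Ioo,
      inter_eq_self_of_subset_left Ioo_subset_Ioi_self]
    have e2 : (∫ t in Ioo (0:ℝ) T, ψ t) = ∫ t in (0:ℝ)..T, ψ t := by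
      rw [intervalIntegral.integral_of_le hTpos.le, integral_Ioc_eq_integral_Ioo]
    rw [e2]
    have hcont : ContinuousOn (fun t : ℝ => (γ - B * t) ^ σ) (uIcc (0:ℝ) T) := by
      apply ContinuousOn.rpow_const
      · exact (continuous_const.sub (continuous_const.mul continuous_id)).continuousOn
      · intro t htmem
        left
        rw [uIcc_of_le hTpos.le] at htmem
        have := hγBt t htmem
        exact ne_of_gt (by linarith)
    have e3 : (∫ t in (0:ℝ)..T, ψ t)
        = (∫ t in (0:ℝ)..T, (1:ℝ)) - ∫ t in (0:ℝ)..T, (γ - B * t) ^ σ := by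
      rw [← intervalIntegral.integral_sub intervalIntegrable_const hcont.intervalIntegrable]
    have e4 : (∫ t in (0:ℝ)..T, (1:ℝ)) = T := by simp
    have e5 : (∫ t in (0:ℝ)..T, (γ - B * t) ^ σ) = (γ ^ (σ + 1) - 1) / ((σ + 1) * B) := by
      have hrw : ∀ t : ℝ, γ - B * t = -B * t + γ := fun t => by ring
      simp_rw [hrw]
      rw [intervalIntegral.integral_comp_mul_add (fun x : ℝ => x ^ σ)
        (neg_ne_zero.mpr hBpos.ne') γ]
      have hb1 : -B * 0 + γ = γ := by ring
      have hb2 : -B * T + γ = 1 := by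
        rw [hTdef]
        field_simp
        ring
      rw [hb1, hb2,
        integral_rpow (Or.inr ⟨by linarith, Set.notMem_uIcc_of_lt hγ0 one_pos⟩),
        Real.one_rpow, smul_eq_mul]
      field_simp
      ring
    rw [e3, e4, e5]
  have hfinal : (0:ℝ) ≤ m - a := by
    rw [hma, hP, hQ]
    have hK : T - (γ ^ (σ + 1) - 1) / ((σ + 1) * B) + γ ^ (σ + 1) / ((σ + 1) * B) = 0 := by
      have hBne : B ≠ 0 := hBpos.ne'
      have h1sne : (1:ℝ) + s ≠ 0 := h1s.ne'
      rw [hTdef, hγdef, hσdef]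
      have hκne' : 1 / s + 1 ≠ 0 := by
        rw [hσdef] at hκne
        exact hκne
      field_simp
      ring
    have h2 := le_trans (le_of_eq hψval.symm) hPlow
    have h3 : (∫ t in Ioi (0:ℝ), (ν {x | t < q x}).toReal)
        ≤ -(γ ^ (σ + 1) / ((σ + 1) * B)) := by
      rw [← neg_div]
      exact hQle
    calc (0:ℝ) = T - (γ ^ (σ + 1) - 1) / ((σ + 1) * B) + γ ^ (σ + 1) / ((σ + 1) * B) :=
          hK.symm
      _ = (T - (γ ^ (σ + 1) - 1) / ((σ + 1) * B)) - -(γ ^ (σ + 1) / ((σ + 1) * B)) := by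
          ring
      _ ≤ (∫ t in Ioi (0:ℝ), (ν {x | t < p x}).toReal)
          - ∫ t in Ioi (0:ℝ), (ν {x | t < q x}).toReal := sub_le_sub h2 h3
  have hcontra : c ≤ F m := by
    have ham' : a ≤ m := by linarith
    calc c = F a := hFa.symm
      _ ≤ F m := hFmono ham'
  exact absurd hcontra (not_le.mpr hFm)

end Grunbaum13

/-- Grünbaum's inequality for `s`-concave probability measures, `s ∈ (-1,0)`:
`μ(H⁻) ≥ (1/(1+s))^{1/s}` for the half-space `H⁻` below the hyperplane through the
barycenter with unit normal `u`. -/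
theorem stmt_13 (n : ℕ) (s : ℝ) (hs : s ∈ Ioo (-1:ℝ) 0)
    (μ : Measure (EuclideanSpace ℝ (Fin n))) [IsProbabilityMeasure μ]
    (hconc : ∀ (A B : Set (EuclideanSpace ℝ (Fin n))), MeasurableSet A → MeasurableSet B →
      0 < μ A → 0 < μ B → ∀ lam ∈ Icc (0:ℝ) 1,
        ((1 - lam) * (μ A).toReal ^ s + lam * (μ B).toReal ^ s) ^ (1 / s)
          ≤ (μ ((1 - lam) • A + lam • B)).toReal)
    (hbar : Integrable (fun x : EuclideanSpace ℝ (Fin n) => x) μ)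
    (g : EuclideanSpace ℝ (Fin n)) (hg : g = ∫ x, x ∂μ)
    (u : EuclideanSpace ℝ (Fin n)) (hu : ‖u‖ = 1) :
    (1 / (1 + s)) ^ (1 / s) ≤ (μ {x | ⟪x, u⟫ ≤ ⟪g, u⟫}).toReal := by
  classical
  set f : EuclideanSpace ℝ (Fin n) → ℝ := fun x => ⟪x, u⟫ with hfdef
  have hfL : ∀ x, f x = (innerSL ℝ u) x := fun x => (real_inner_comm x u).symm
  have hfcont : Continuous f := by
    have : Continuous fun x : EuclideanSpace ℝ (Fin n) => (innerSL ℝ u) x :=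
      (innerSL ℝ u).continuous
    refine this.congr fun x => (hfL x).symm
  have hfmeas : Measurable f := hfcont.measurable
  have hfint : Integrable f μ := by
    have h := (innerSL ℝ u).integrable_comp hbar
    exact h.congr (Filter.Eventually.of_forall fun x => (hfL x).symm)
  set ν := Measure.map f μ with hνdef
  haveI : IsProbabilityMeasure ν := Measure.isProbabilityMeasure_map hfmeas.aemeasurable
  have hmap : ∀ t : ℝ, ν (Iic t) = μ {x | f x ≤ t} := by
    intro t
    rw [hνdef, Measure.map_apply hfmeas measurableSet_Iic]
    rfl
  have hmean : ⟪g, u⟫ = ∫ x, x ∂ν := by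
    have h0 : (∫ x : ℝ, x ∂ν) = ∫ x, f x ∂μ := by
      rw [hνdef]
      exact integral_map hfmeas.aemeasurable aestronglyMeasurable_id
    rw [h0]
    have h1 : (∫ x, f x ∂μ) = (innerSL ℝ u) (∫ x, x ∂μ) := by
      rw [← ContinuousLinearMap.integral_comp_comm _ hbar]
      exact integral_congr_ae (Filter.Eventually.of_forall fun x => hfL x)
    have h2 : ⟪g, u⟫ = (innerSL ℝ u) g := (real_inner_comm g u).symm
    rw [h2, hg, ← h1]
  have hGν : ∀ t t' : ℝ, 0 < ν (Iic t) → 0 < ν (Iic t') → ∀ lam ∈ Icc (0:ℝ) 1,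
      ((1 - lam) * (ν (Iic t)).toReal ^ s + lam * (ν (Iic t')).toReal ^ s) ^ (1 / s)
        ≤ (ν (Iic ((1 - lam) * t + lam * t'))).toReal := by
    intro t t' ht ht' lam hlam
    rw [hmap] at ht ht'
    rw [hmap, hmap, hmap]
    have hA : MeasurableSet {x | f x ≤ t} := hfmeas measurableSet_Iic
    have hB : MeasurableSet {x | f x ≤ t'} := hfmeas measurableSet_Iic
    have key := hconc {x | f x ≤ t} {x | f x ≤ t'} hA hB ht ht' lam hlam
    refine le_trans key (ENNReal.toReal_mono (measure_ne_top μ _) (measure_mono ?_))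
    rintro x hx
    rw [Set.mem_add] at hx
    obtain ⟨y, hy, z, hz, rfl⟩ := hx
    obtain ⟨y₀, hy₀, rfl⟩ := hy
    obtain ⟨z₀, hz₀, rfl⟩ := hz
    show f ((1 - lam) • y₀ + lam • z₀) ≤ (1 - lam) * t + lam * t'
    have hlin : f ((1 - lam) • y₀ + lam • z₀) = (1 - lam) * f y₀ + lam * f z₀ := by
      simp only [hfL, map_add, _root_.map_smul, smul_eq_mul]
    rw [hlin]
    have h1 : (1 - lam) * f y₀ ≤ (1 - lam) * t :=
      mul_le_mul_of_nonneg_left hy₀ (by linarith [hlam.2])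
    have h2 : lam * f z₀ ≤ lam * t' := mul_le_mul_of_nonneg_left hz₀ hlam.1
    linarith
  have hintν : Integrable (fun x : ℝ => x) ν := by
    rw [hνdef]
    exact (integrable_map_measure aestronglyMeasurable_id hfmeas.aemeasurable).mpr hfint
  have hmain := Grunbaum13.onedim s hs.1 hs.2 ν hGν hintν hmean
  rw [hmap] at hmain
  exact hmain
end

section
/- Fix s ≤ −1. There exists a sequence (μ_k) of s-concave probability measures on ℝ (with densities supported on [0, 1−1/k]) such that μ_k((-∞, g_{μ_k}]) → 0 as k → ∞, where g_{μ_k} is the barycenter of μ_k. -/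
open MeasureTheory Set Pointwise Filter
open scoped ENNReal

noncomputable section BMsection

namespace BMaux

/-- weighted harmonic mean -/
def hm (l x y : ℝ) : ℝ := x * y / ((1 - l) * y + l * x)

lemma hm_denom_pos {l x y : ℝ} (hl0 : 0 ≤ l) (hl1 : l ≤ 1) (hx : 0 < x) (hy : 0 < y) :
    0 < (1 - l) * y + l * x := by
  rcases le_total x y with h | h
  · nlinarith [mul_nonneg (sub_nonneg.2 hl1) (sub_nonneg.2 h)]
  · nlinarith [mul_nonneg hl0 (sub_nonneg.2 h)]

lemma hm_pos {l x y : ℝ} (hl0 : 0 ≤ l) (hl1 : l ≤ 1) (hx : 0 < x) (hy : 0 < y) :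
    0 < hm l x y := div_pos (mul_pos hx hy) (hm_denom_pos hl0 hl1 hx hy)

lemma hm_mono {l x y x' y' : ℝ} (hl0 : 0 ≤ l) (hl1 : l ≤ 1) (hx : 0 < x) (hy : 0 < y)
    (hxx : x ≤ x') (hyy : y ≤ y') : hm l x y ≤ hm l x' y' := by
  have hx' : 0 < x' := lt_of_lt_of_le hx hxx
  have hy' : 0 < y' := lt_of_lt_of_le hy hyy
  rw [hm, hm, div_le_div_iff₀ (hm_denom_pos hl0 hl1 hx hy) (hm_denom_pos hl0 hl1 hx' hy')]
  nlinarith [mul_nonneg (mul_nonneg (sub_nonneg.2 hl1) (mul_pos hy hy').le) (sub_nonneg.2 hxx),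
    mul_nonneg (mul_nonneg hl0 (mul_pos hx hx').le) (sub_nonneg.2 hyy)]

lemma hm_superadd {l u v a b : ℝ} (hl0 : 0 ≤ l) (hl1 : l ≤ 1) (hu : 0 < u) (hv : 0 < v)
    (ha : 0 < a) (hb : 0 < b) : hm l u v + hm l a b ≤ hm l (u + a) (v + b) := by
  have d1 := hm_denom_pos hl0 hl1 hu hv
  have d2 := hm_denom_pos hl0 hl1 ha hb
  have d3 := hm_denom_pos hl0 hl1 (add_pos hu ha) (add_pos hv hb)
  rw [hm, hm, hm, div_add_div _ _ (ne_of_gt d1) (ne_of_gt d2),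
    div_le_div_iff₀ (mul_pos d1 d2) d3]
  nlinarith [mul_nonneg (mul_nonneg hl0 (sub_nonneg.2 hl1)) (sq_nonneg (u * b - v * a))]

lemma hm_smul {l x y c : ℝ} (hl0 : 0 ≤ l) (hl1 : l ≤ 1) (hx : 0 < x) (hy : 0 < y) (hc : 0 < c) :
    hm l (c * x) (c * y) = c * hm l x y := by
  have e : (1 - l) * (c * y) + l * (c * x) = c * ((1 - l) * y + l * x) := by ring
  rw [hm, hm, e, show c * x * (c * y) = c * (c * (x * y)) by ring,
    mul_div_mul_left _ _ (ne_of_gt hc), mul_div_assoc]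

lemma hm_le_max {l x y M : ℝ} (hl0 : 0 ≤ l) (hl1 : l ≤ 1) (hx : 0 < x) (hy : 0 < y)
    (hxM : x ≤ M) (hyM : y ≤ M) : hm l x y ≤ M := by
  rw [hm, div_le_iff₀ (hm_denom_pos hl0 hl1 hx hy)]
  nlinarith [mul_nonneg (mul_nonneg (sub_nonneg.2 hl1) (sub_nonneg.2 hxM)) hy.le,
    mul_nonneg (mul_nonneg hl0 (sub_nonneg.2 hyM)) hx.le]

lemma le_hm {l x y m : ℝ} (hl0 : 0 ≤ l) (hl1 : l ≤ 1) (hx : 0 < x) (hy : 0 < y)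
    (hm' : 0 < m) (hmx : m ≤ x) (hmy : m ≤ y) : m ≤ hm l x y := by
  rw [hm, le_div_iff₀ (hm_denom_pos hl0 hl1 hx hy)]
  nlinarith [mul_nonneg (mul_nonneg (sub_nonneg.2 hl1) hy.le) (sub_nonneg.2 hmx),
    mul_nonneg (mul_nonneg hl0 hx.le) (sub_nonneg.2 hmy)]

lemma hm_eq_inv {l a b : ℝ} (hl0 : 0 ≤ l) (hl1 : l ≤ 1) (ha : 0 < a) (hb : 0 < b) :
    hm l a b = ((1 - l) * a⁻¹ + l * b⁻¹)⁻¹ := by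
  have e : (1 - l) * a⁻¹ + l * b⁻¹ = ((1 - l) * b + l * a) / (a * b) := by
    field_simp
  rw [hm, e, inv_div]

/-- the power-mean comparison `M_s ≤ M_{-1}` for `s ≤ -1`. -/
lemma pm_le_hm {s a b l : ℝ} (hs : s ≤ -1) (ha : 0 < a) (hb : 0 < b)
    (hl0 : 0 ≤ l) (hl1 : l ≤ 1) :
    ((1 - l) * a ^ s + l * b ^ s) ^ (1 / s) ≤ hm l a b := by
  have hs0 : s < 0 := lt_of_le_of_lt hs (by norm_num)
  set D := (1 - l) * a⁻¹ + l * b⁻¹ with hDdef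
  have hD : 0 < D := hm_denom_pos hl0 hl1 (inv_pos.2 hb) (inv_pos.2 ha)
  have hconv : D ^ (-s) ≤ (1 - l) * a ^ s + l * b ^ s := by
    have h1 : (1 : ℝ) ≤ -s := by linarith
    have hcx := (convexOn_rpow h1).2 (mem_Ici.2 (inv_pos.2 ha).le) (mem_Ici.2 (inv_pos.2 hb).le)
      (sub_nonneg.2 hl1) hl0 (by ring)
    simp only [smul_eq_mul] at hcx
    have e1 : a⁻¹ ^ (-s) = a ^ s := by
      rw [Real.inv_rpow ha.le, ← Real.rpow_neg ha.le, neg_neg]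
    have e2 : b⁻¹ ^ (-s) = b ^ s := by
      rw [Real.inv_rpow hb.le, ← Real.rpow_neg hb.le, neg_neg]
    rw [e1, e2] at hcx
    exact hcx
  have hstep : ((1 - l) * a ^ s + l * b ^ s) ^ (1 / s) ≤ (D ^ (-s)) ^ (1 / s) :=
    Real.rpow_le_rpow_of_nonpos (Real.rpow_pos_of_pos hD _) hconv
      (le_of_lt (one_div_neg.2 hs0))
  calc ((1 - l) * a ^ s + l * b ^ s) ^ (1 / s) ≤ (D ^ (-s)) ^ (1 / s) := hstep
    _ = D ^ ((-s) * (1 / s)) := by rw [← Real.rpow_mul hD.le]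
    _ = D ^ (-1 : ℝ) := by
        congr 1
        rw [mul_one_div, div_eq_iff (ne_of_lt hs0)]
        ring
    _ = D⁻¹ := by rw [Real.rpow_neg_one]
    _ = hm l a b := (hm_eq_inv hl0 hl1 ha hb).symm


/-! ### Quantile function of a compact set -/

lemma exists_quantile {P : Set ℝ} (hPc : IsCompact P) (hP1 : P ⊆ Icc 0 1) {α : ℝ}
    (hα : 0 < α) (hvol : volume P = ENNReal.ofReal α) :
    ∃ q : ℝ → ℝ, (∀ θ, θ ∈ Ioo (0:ℝ) 1 → q θ ∈ P) ∧
      (∀ θ θ', θ ∈ Ioo (0:ℝ) 1 → θ' ∈ Ioo (0:ℝ) 1 → θ ≤ θ' →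
        α * (θ' - θ) ≤ q θ' - q θ) := by
  have hPm : MeasurableSet P := hPc.measurableSet
  set G : ℝ → ℝ := fun x => (volume (P ∩ Iic x)).toReal with hG
  have hfin : ∀ x, volume (P ∩ Iic x) ≠ ∞ := by
    intro x
    exact ne_top_of_le_ne_top (by rw [hvol]; exact ENNReal.ofReal_ne_top)
      (measure_mono inter_subset_left)
  have hGmono : Monotone G := by
    intro x y hxy
    exact ENNReal.toReal_mono (hfin y) (measure_mono (inter_subset_inter_right _ (Iic_subset_Iic.2 hxy)))
  have hGdiff : ∀ x y : ℝ, x ≤ y → G y - G x = (volume (P ∩ Ioc x y)).toReal := by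
    intro x y hxy
    have hsplit : P ∩ Iic y = (P ∩ Iic x) ∪ (P ∩ Ioc x y) := by
      rw [← inter_union_distrib_left]
      congr 1
      rw [Iic_union_Ioc_eq_Iic hxy]
    have hdisj : Disjoint (P ∩ Iic x) (P ∩ Ioc x y) := by
      apply Disjoint.inter_left' ; apply Disjoint.inter_right'
      exact Iic_disjoint_Ioc le_rfl
    have : volume (P ∩ Iic y) = volume (P ∩ Iic x) + volume (P ∩ Ioc x y) := by
      rw [hsplit, measure_union hdisj (hPm.inter measurableSet_Ioc)]
    rw [hG]
    simp only
    rw [this, ENNReal.toReal_add (hfin x) (ne_top_of_le_ne_top (hfin y)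
      (by rw [hsplit]; exact measure_mono subset_union_right))]
    ring
  have hGlip : ∀ x y : ℝ, x ≤ y → G y - G x ≤ y - x := by
    intro x y hxy
    rw [hGdiff x y hxy]
    have h1 : volume (P ∩ Ioc x y) ≤ ENNReal.ofReal (y - x) := by
      calc volume (P ∩ Ioc x y) ≤ volume (Ioc x y) := measure_mono inter_subset_right
        _ = ENNReal.ofReal (y - x) := Real.volume_Ioc
    calc (volume (P ∩ Ioc x y)).toReal ≤ (ENNReal.ofReal (y - x)).toReal :=
          ENNReal.toReal_mono ENNReal.ofReal_ne_top h1
      _ = y - x := ENNReal.toReal_ofReal (by linarith)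
  have hGcont : Continuous G := by
    have : LipschitzWith 1 G := by
      apply LipschitzWith.of_dist_le_mul
      intro x y
      rw [Real.dist_eq, Real.dist_eq, NNReal.coe_one, one_mul]
      rcases le_total x y with h | h
      · rw [abs_sub_comm, abs_of_nonneg (sub_nonneg.2 (hGmono h)),
          abs_of_nonpos (by linarith : x - y ≤ 0)]
        have := hGlip x y h; linarith
      · rw [abs_of_nonneg (sub_nonneg.2 (hGmono h)), abs_of_nonneg (by linarith : 0 ≤ x - y)]
        have := hGlip y x h; linarith
    exact this.continuous
  have hGneg : ∀ x : ℝ, x < 0 → G x = 0 := by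
    intro x hx
    have : P ∩ Iic x = ∅ := by
      apply eq_empty_of_forall_notMem
      rintro t ⟨htP, ht⟩
      have := (hP1 htP).1
      simp only [mem_Iic] at ht
      linarith
    rw [hG]; simp [this]
  have hG1 : G 1 = α := by
    have : P ∩ Iic 1 = P := inter_eq_left.2 (fun t ht => (hP1 ht).2)
    rw [hG]; simp only [this, hvol]; exact ENNReal.toReal_ofReal hα.le
  set q : ℝ → ℝ := fun θ => sInf {x | α * θ ≤ G x} with hq
  have hSne : ∀ θ : ℝ, θ ≤ 1 → (1:ℝ) ∈ {x | α * θ ≤ G x} := by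
    intro θ hθ
    simp only [mem_setOf_eq, hG1]
    nlinarith
  have hSbdd : ∀ θ : ℝ, 0 < θ → BddBelow {x | α * θ ≤ G x} := by
    intro θ hθ
    refine ⟨-1, fun x hx => ?_⟩
    simp only [mem_setOf_eq] at hx
    by_contra hcon
    push_neg at hcon
    have : G x = 0 := hGneg x (by linarith)
    nlinarith
  have hScl : ∀ θ : ℝ, IsClosed {x | α * θ ≤ G x} := by
    intro θ
    exact isClosed_le continuous_const hGcont
  have hqS : ∀ θ ∈ Ioo (0:ℝ) 1, α * θ ≤ G (q θ) := by
    intro θ hθ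
    exact (hScl θ).csInf_mem ⟨1, hSne θ hθ.2.le⟩ (hSbdd θ hθ.1)
  have hGq : ∀ θ ∈ Ioo (0:ℝ) 1, G (q θ) = α * θ := by
    intro θ hθ
    refine le_antisymm ?_ (hqS θ hθ)
    by_contra hcon
    push_neg at hcon
    set δ := G (q θ) - α * θ with hδ
    have hδ0 : 0 < δ := by linarith
    have h2 : α * θ ≤ G (q θ - δ) := by
      have := hGlip (q θ - δ) (q θ) (by linarith)
      linarith
    have : q θ ≤ q θ - δ := csInf_le (hSbdd θ hθ.1) h2
    linarith
  have hmem : ∀ θ ∈ Ioo (0:ℝ) 1, q θ ∈ P := by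
    intro θ hθ
    by_contra hnot
    obtain ⟨δ, hδ0, hball⟩ := Metric.isOpen_iff.1 hPc.isClosed.isOpen_compl (q θ) hnot
    have hGeq : G (q θ - δ/2) = G (q θ) := by
      have h1 : P ∩ Ioc (q θ - δ/2) (q θ) = ∅ := by
        apply eq_empty_of_forall_notMem
        rintro t ⟨htP, ht⟩
        apply hball _ htP
        rw [Metric.mem_ball, Real.dist_eq, abs_sub_comm,
          abs_of_nonneg (sub_nonneg.2 ht.2)]
        simp only [mem_Ioc] at ht
        linarith [ht.1]
      have := hGdiff (q θ - δ/2) (q θ) (by linarith)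
      rw [h1] at this
      simp at this
      linarith
    have h3 : α * θ ≤ G (q θ - δ/2) := by rw [hGeq]; exact hqS θ hθ
    have : q θ ≤ q θ - δ/2 := csInf_le (hSbdd θ hθ.1) h3
    linarith
  refine ⟨q, hmem, ?_⟩
  intro θ θ' hθ hθ' hle
  have hqmono : q θ ≤ q θ' := by
    apply csInf_le_csInf (hSbdd θ hθ.1) ⟨1, hSne θ' hθ'.2.le⟩
    intro x hx
    simp only [mem_setOf_eq] at hx ⊢
    nlinarith
  have := hGlip (q θ) (q θ') hqmono
  rw [hGq θ hθ, hGq θ' hθ'] at this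
  linarith

/-! ### Images of expanding maps -/

lemma volume_image_ge {f : ℝ → ℝ} {c : ℝ} (hc : 0 < c) {S : Set ℝ}
    (hf : ∀ x ∈ S, ∀ y ∈ S, x ≤ y → c * (y - x) ≤ f y - f x) :
    ENNReal.ofReal c * volume S ≤ volume (f '' S) := by
  classical
  set g : ℝ → ℝ := fun y => sSup {x ∈ S | f x ≤ y} with hg
  have key : ∀ x ∈ S, g (f x) = x := by
    intro x hx
    have hub : ∀ x' ∈ {x' ∈ S | f x' ≤ f x}, x' ≤ x := by
      rintro x' ⟨hx'S, hx'f⟩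
      by_contra hcon
      push_neg at hcon
      have := hf x hx x' hx'S hcon.le
      nlinarith
    exact le_antisymm (csSup_le ⟨x, hx, le_rfl⟩ hub)
      (le_csSup ⟨x, hub⟩ ⟨hx, le_rfl⟩)
  have hmono : ∀ x ∈ S, ∀ y ∈ S, x ≤ y → f x ≤ f y := by
    intro x hx y hy hxy
    have := hf x hx y hy hxy
    nlinarith [mul_nonneg hc.le (sub_nonneg.2 hxy)]
  have hlip : LipschitzOnWith (Real.toNNReal c⁻¹) g (f '' S) := by
    rw [lipschitzOnWith_iff_dist_le_mul]
    rintro u ⟨x, hx, rfl⟩ v ⟨y, hy, rfl⟩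
    rw [key x hx, key y hy, Real.dist_eq, Real.dist_eq,
      Real.coe_toNNReal _ (inv_nonneg.2 hc.le)]
    rcases le_total x y with h | h
    · have h0 : 0 ≤ c * (y - x) := mul_nonneg hc.le (by linarith)
      have h1 := hf x hx y hy h
      rw [abs_sub_comm, abs_of_nonneg (by linarith), abs_sub_comm,
        abs_of_nonneg (by linarith)]
      rw [inv_mul_eq_div, le_div_iff₀ hc]
      linarith
    · have h0 : 0 ≤ c * (x - y) := mul_nonneg hc.le (by linarith)
      have h1 := hf y hy x hx h
      rw [abs_of_nonneg (by linarith), abs_of_nonneg (by linarith)]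
      rw [inv_mul_eq_div, le_div_iff₀ hc]
      linarith
  have hsub : S ⊆ g '' (f '' S) := by
    intro x hx
    exact ⟨f x, mem_image_of_mem f hx, key x hx⟩
  have h1 : volume S ≤ volume (g '' (f '' S)) := measure_mono hsub
  have h2 : volume (g '' (f '' S)) ≤ (Real.toNNReal c⁻¹ : ℝ≥0∞) * volume (f '' S) := by
    have := hlip.hausdorffMeasure_image_le (zero_le_one (α := ℝ))
    rw [MeasureTheory.hausdorffMeasure_real] at this
    rwa [ENNReal.rpow_one] at this
  calc ENNReal.ofReal c * volume S ≤ ENNReal.ofReal c *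
        ((Real.toNNReal c⁻¹ : ℝ≥0∞) * volume (f '' S)) := by
        exact mul_le_mul_right (h1.trans h2) _
    _ = (ENNReal.ofReal c * ENNReal.ofReal c⁻¹) * volume (f '' S) := by
        rw [show (Real.toNNReal c⁻¹ : ℝ≥0∞) = ENNReal.ofReal c⁻¹ from rfl, mul_assoc]
    _ = volume (f '' S) := by
        rw [← ENNReal.ofReal_mul hc.le, mul_inv_cancel₀ (ne_of_gt hc)]
        simp


/-! ### The measures -/

def cl01 (u : ℝ) : ℝ := max 0 (min u 1)

lemma cl01_mem (u : ℝ) : cl01 u ∈ Icc (0:ℝ) 1 :=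
  ⟨le_max_left _ _, max_le (by norm_num) (min_le_right _ _)⟩

lemma cl01_of_mem {u : ℝ} (h : u ∈ Icc (0:ℝ) 1) : cl01 u = u := by
  rw [cl01, min_eq_left h.2, max_eq_right h.1]

lemma cl01_continuous : Continuous cl01 :=
  continuous_const.max (continuous_id.min continuous_const)

def Tm (k : ℕ) (u : ℝ) : ℝ := 1 - 1 / (1 + ((k:ℝ) - 1) * cl01 u)

def dens (k : ℕ) (t : ℝ) : ℝ≥0∞ :=
  (Icc (0:ℝ) (1 - 1/(k:ℝ))).indicator
    (fun t => ENNReal.ofReal (((k:ℝ) - 1)⁻¹ * ((1 - t)^2)⁻¹)) t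

def mes (k : ℕ) : Measure ℝ := volume.withDensity (dens k)

def Fc (k : ℕ) (x : ℝ) : ℝ := ((k:ℝ) - 1)⁻¹ * ((1 - x)⁻¹ - 1)

lemma dens_zero (k : ℕ) {t : ℝ} (ht : t ∉ Icc (0:ℝ) (1 - 1/(k:ℝ))) : dens k t = 0 :=
  indicator_of_notMem ht _

lemma kR2 {k : ℕ} (hk : 2 ≤ k) : (2:ℝ) ≤ (k:ℝ) := by exact_mod_cast hk

lemma hm0' {k : ℕ} (hk : 2 ≤ k) : 0 ≤ 1 - 1/(k:ℝ) := by
  have h := kR2 hk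
  have : 1/(k:ℝ) ≤ 1/2 := by
    apply div_le_div_of_nonneg_left (by norm_num) (by norm_num) h
  linarith

lemma hm1' {k : ℕ} (hk : 2 ≤ k) : 1 - 1/(k:ℝ) < 1 := by
  have h := kR2 hk
  have : 0 < 1/(k:ℝ) := by positivity
  linarith

lemma mes_apply (k : ℕ) {S : Set ℝ} (hS : MeasurableSet S) :
    mes k S = ∫⁻ t in S ∩ Icc (0:ℝ) (1 - 1/(k:ℝ)),
      ENNReal.ofReal (((k:ℝ) - 1)⁻¹ * ((1 - t)^2)⁻¹) := by
  rw [mes, withDensity_apply _ hS]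
  have : ∫⁻ t in S, dens k t =
      ∫⁻ t in Icc (0:ℝ) (1 - 1/(k:ℝ)), (fun t => ENNReal.ofReal (((k:ℝ) - 1)⁻¹ * ((1 - t)^2)⁻¹)) t
        ∂(volume.restrict S) := by
    rw [← lintegral_indicator measurableSet_Icc]
    rfl
  rw [this, Measure.restrict_restrict measurableSet_Icc, inter_comm]

lemma integral_density (k : ℕ) (hk : 2 ≤ k) {x : ℝ} (hx0 : 0 ≤ x) (hx : x ≤ 1 - 1/(k:ℝ)) :
    ∫⁻ t in Icc (0:ℝ) x, ENNReal.ofReal (((k:ℝ) - 1)⁻¹ * ((1 - t)^2)⁻¹)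
      = ENNReal.ofReal (Fc k x) := by
  have hk2 := kR2 hk
  have hm1 := hm1' hk
  have hc : (0:ℝ) ≤ ((k:ℝ) - 1)⁻¹ := inv_nonneg.2 (by linarith)
  set f : ℝ → ℝ := fun t => ((k:ℝ) - 1)⁻¹ * ((1 - t)^2)⁻¹ with hf
  have hlt : ∀ t : ℝ, t ∈ Icc (0:ℝ) x → t < 1 := fun t ht =>
    lt_of_le_of_lt (ht.2.trans hx) hm1
  have hcont : ContinuousOn f (Icc 0 x) := by
    apply ContinuousOn.mul continuousOn_const
    apply ContinuousOn.inv₀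
    · exact ((continuous_const.sub continuous_id).pow 2).continuousOn
    · intro t ht
      have h1 := hlt t ht
      exact pow_ne_zero _ (by intro hzero; rw [sub_eq_zero] at hzero; linarith)
  have hint : IntegrableOn f (Icc 0 x) volume := hcont.integrableOn_compact isCompact_Icc
  have hnn : 0 ≤ᵐ[volume.restrict (Icc (0:ℝ) x)] f := by
    apply ae_of_all
    intro t
    exact mul_nonneg hc (by positivity)
  rw [← MeasureTheory.ofReal_integral_eq_lintegral_ofReal hint hnn]
  congr 1
  rw [MeasureTheory.integral_Icc_eq_integral_Ioc, ← intervalIntegral.integral_of_le hx0]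
  have hcont' : ContinuousOn f (uIcc (0:ℝ) x) := by rwa [uIcc_of_le hx0]
  have hderiv : ∀ t ∈ uIcc (0:ℝ) x, HasDerivAt (fun t => ((k:ℝ) - 1)⁻¹ * (1 - t)⁻¹) (f t) t := by
    intro t ht
    rw [uIcc_of_le hx0] at ht
    have h1 : (1:ℝ) - t ≠ 0 := by
      have := hlt t ht
      intro hzero; rw [sub_eq_zero] at hzero; linarith
    have h2 : HasDerivAt (fun t : ℝ => 1 - t) (-1) t := (hasDerivAt_id t).const_sub 1
    have h3 := h2.inv h1
    have h4 := h3.const_mul (((k:ℝ) - 1)⁻¹)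
    rw [show f t = (((k:ℝ) - 1)⁻¹ * (- -1 / (1 - t) ^ 2)) by simp only [hf, neg_neg, one_div]]
    exact h4
  rw [intervalIntegral.integral_eq_sub_of_hasDerivAt hderiv hcont'.intervalIntegrable]
  rw [Fc]
  norm_num
  ring

lemma Fc_m (k : ℕ) (hk : 2 ≤ k) : Fc k (1 - 1/(k:ℝ)) = 1 := by
  have hk2 := kR2 hk
  have hk0 : (k:ℝ) ≠ 0 := by linarith
  have hK0 : (k:ℝ) - 1 ≠ 0 := by intro h; nlinarith
  rw [Fc]
  have h1 : (1:ℝ) - (1 - 1/(k:ℝ)) = 1/(k:ℝ) := by ring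
  rw [h1, one_div, inv_inv]
  field_simp

lemma mes_prob (k : ℕ) (hk : 2 ≤ k) : IsProbabilityMeasure (mes k) := by
  constructor
  rw [mes_apply k MeasurableSet.univ, univ_inter,
    integral_density k hk (hm0' hk) le_rfl, Fc_m k hk, ENNReal.ofReal_one]

lemma mes_Iic (k : ℕ) (hk : 2 ≤ k) {x : ℝ} (hx0 : 0 ≤ x) (hx : x ≤ 1 - 1/(k:ℝ)) :
    mes k (Iic x) = ENNReal.ofReal (Fc k x) := by
  rw [mes_apply k measurableSet_Iic]
  have hset : Iic x ∩ Icc (0:ℝ) (1 - 1/(k:ℝ)) = Icc 0 x := by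
    ext t
    simp only [mem_inter_iff, mem_Iic, mem_Icc]
    exact ⟨fun ⟨h1, h2, _⟩ => ⟨h2, h1⟩, fun ⟨h1, h2⟩ => ⟨h2, h1, h2.trans hx⟩⟩
  rw [hset, integral_density k hk hx0 hx]

lemma Tm_denpos (k : ℕ) (hk : 2 ≤ k) (u : ℝ) : 0 < 1 + ((k:ℝ) - 1) * cl01 u := by
  have hk2 := kR2 hk
  have h1 := (cl01_mem u).1
  nlinarith

lemma Tm_continuous (k : ℕ) (hk : 2 ≤ k) : Continuous (Tm k) := by
  apply continuous_const.sub
  exact (continuous_const.div (continuous_const.add (continuous_const.mul cl01_continuous))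
    (fun u => ne_of_gt (Tm_denpos k hk u)))

lemma Tm_mem (k : ℕ) (hk : 2 ≤ k) (u : ℝ) : Tm k u ∈ Icc (0:ℝ) (1 - 1/(k:ℝ)) := by
  have hk2 := kR2 hk
  have hd := Tm_denpos k hk u
  have hc := cl01_mem u
  constructor
  · rw [Tm, sub_nonneg, div_le_one hd]
    nlinarith [hc.1]
  · have hkpos : (0:ℝ) < k := by linarith
    have h2 : 1 + ((k:ℝ) - 1) * cl01 u ≤ (k:ℝ) := by nlinarith [hc.2]
    have h3 : 1/(k:ℝ) ≤ 1/(1 + ((k:ℝ) - 1) * cl01 u) :=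
      one_div_le_one_div_of_le hd h2
    rw [Tm]
    linarith

lemma Tm_eq (k : ℕ) {u : ℝ} (hu : u ∈ Icc (0:ℝ) 1) :
    Tm k u = 1 - 1 / (1 + ((k:ℝ) - 1) * u) := by rw [Tm, cl01_of_mem hu]


lemma Tm_le_iff (k : ℕ) (hk : 2 ≤ k) {u x : ℝ} (hu : u ∈ Icc (0:ℝ) 1)
    (hx0 : 0 ≤ x) (hx : x ≤ 1 - 1/(k:ℝ)) :
    Tm k u ≤ x ↔ u ≤ Fc k x := by
  have hk2 := kR2 hk
  have hK1 : (1:ℝ) ≤ (k:ℝ) - 1 := by linarith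
  have hK0 : ((k:ℝ) - 1) ≠ 0 := by linarith
  have hd : 0 < 1 + ((k:ℝ) - 1) * u := by nlinarith [hu.1]
  have h1k : 0 < 1/(k:ℝ) := by positivity
  have hx1 : 0 < 1 - x := by linarith
  rw [Tm_eq k hu, Fc]
  constructor
  · intro h
    have h2 : 1 - x ≤ 1 / (1 + ((k:ℝ) - 1) * u) := by linarith
    have h3 : (1 - x) * (1 + ((k:ℝ) - 1) * u) ≤ 1 := (le_div_iff₀ hd).1 h2
    have h4 : 1 + ((k:ℝ) - 1) * u ≤ (1 - x)⁻¹ := by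
      rw [← one_div, le_div_iff₀ hx1]
      nlinarith
    have h5 : ((k:ℝ) - 1) * u ≤ (1 - x)⁻¹ - 1 := by linarith
    calc u = ((k:ℝ) - 1)⁻¹ * (((k:ℝ) - 1) * u) := by field_simp
      _ ≤ ((k:ℝ) - 1)⁻¹ * ((1 - x)⁻¹ - 1) :=
          mul_le_mul_of_nonneg_left h5 (inv_nonneg.2 (by linarith))
  · intro h
    have h5 : ((k:ℝ) - 1) * u ≤ (1 - x)⁻¹ - 1 := by
      have h6 := mul_le_mul_of_nonneg_left h (by linarith : (0:ℝ) ≤ (k:ℝ) - 1)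
      rw [← mul_assoc, mul_inv_cancel₀ hK0, one_mul] at h6
      exact h6
    have h4 : 1 + ((k:ℝ) - 1) * u ≤ (1 - x)⁻¹ := by linarith
    have h3 : (1 + ((k:ℝ) - 1) * u) * (1 - x) ≤ 1 := by
      rw [← one_div] at h4
      exact (le_div_iff₀ hx1).1 h4
    have h2 : 1 - x ≤ 1 / (1 + ((k:ℝ) - 1) * u) := by
      rw [le_div_iff₀ hd]
      nlinarith
    linarith

lemma Fc_nonneg (k : ℕ) (hk : 2 ≤ k) {x : ℝ} (hx0 : 0 ≤ x) (hx : x ≤ 1 - 1/(k:ℝ)) :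
    0 ≤ Fc k x := by
  have hk2 := kR2 hk
  have h1k : 0 < 1/(k:ℝ) := by positivity
  have hx1 : 0 < 1 - x := by linarith
  have h2 : (1 - x) * (1 - x)⁻¹ = 1 := mul_inv_cancel₀ (ne_of_gt hx1)
  have h3 : (1:ℝ) ≤ (1 - x)⁻¹ := by nlinarith [inv_pos.2 hx1]
  exact mul_nonneg (inv_nonneg.2 (by linarith)) (by linarith)

lemma Fc_le_one (k : ℕ) (hk : 2 ≤ k) {x : ℝ} (hx0 : 0 ≤ x) (hx : x ≤ 1 - 1/(k:ℝ)) :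
    Fc k x ≤ 1 := by
  have hk2 := kR2 hk
  have h1k : 0 < 1/(k:ℝ) := by positivity
  have hx1 : 0 < 1 - x := by linarith
  have h4 : (1:ℝ)/(k:ℝ) ≤ 1 - x := by linarith
  have h5 : (1 - x)⁻¹ ≤ ((1:ℝ)/(k:ℝ))⁻¹ := by
    apply inv_anti₀ h1k h4
  rw [one_div, inv_inv] at h5
  rw [Fc]
  have hK0 : (0:ℝ) < (k:ℝ) - 1 := by linarith
  calc ((k:ℝ) - 1)⁻¹ * ((1 - x)⁻¹ - 1) ≤ ((k:ℝ) - 1)⁻¹ * ((k:ℝ) - 1) :=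
        mul_le_mul_of_nonneg_left (by linarith) (inv_nonneg.2 hK0.le)
    _ = 1 := inv_mul_cancel₀ (ne_of_gt hK0)

lemma map_eq (k : ℕ) (hk : 2 ≤ k) :
    Measure.map (Tm k) (volume.restrict (Icc (0:ℝ) 1)) = mes k := by
  have hk2 := kR2 hk
  have hTme : Measurable (Tm k) := (Tm_continuous k hk).measurable
  haveI hfin : IsFiniteMeasure (Measure.map (Tm k) (volume.restrict (Icc (0:ℝ) 1))) := by
    constructor
    rw [Measure.map_apply hTme MeasurableSet.univ, preimage_univ,
      Measure.restrict_apply MeasurableSet.univ, univ_inter, Real.volume_Icc]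
    norm_num
  refine Measure.ext_of_Iic _ _ (fun x => ?_)
  rw [Measure.map_apply hTme measurableSet_Iic,
    Measure.restrict_apply (hTme measurableSet_Iic)]
  rcases lt_or_ge x 0 with hx | hx0
  · have he : Tm k ⁻¹' Iic x ∩ Icc 0 1 = ∅ := by
      apply eq_empty_of_forall_notMem
      rintro u ⟨hu1, _⟩
      have h0 := (Tm_mem k hk u).1
      simp only [mem_preimage, mem_Iic] at hu1
      linarith
    rw [he, measure_empty, mes_apply k measurableSet_Iic]
    have he2 : Iic x ∩ Icc (0:ℝ) (1 - 1/(k:ℝ)) = ∅ := by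
      apply eq_empty_of_forall_notMem
      rintro t ⟨ht1, ht2⟩
      simp only [mem_Iic] at ht1
      have := ht2.1
      linarith
    rw [he2]
    simp
  rcases le_or_gt x (1 - 1/(k:ℝ)) with hxm | hxm
  · have hset : Tm k ⁻¹' Iic x ∩ Icc 0 1 = Icc 0 (Fc k x) := by
      ext u
      simp only [mem_inter_iff, mem_preimage, mem_Iic, mem_Icc]
      constructor
      · rintro ⟨h1, h2, h3⟩
        exact ⟨h2, (Tm_le_iff k hk ⟨h2, h3⟩ hx0 hxm).1 h1⟩
      · rintro ⟨h1, h2⟩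
        have hu : u ∈ Icc (0:ℝ) 1 := ⟨h1, h2.trans (Fc_le_one k hk hx0 hxm)⟩
        exact ⟨(Tm_le_iff k hk hu hx0 hxm).2 h2, hu.1, hu.2⟩
    rw [hset, Real.volume_Icc, mes_Iic k hk hx0 hxm, sub_zero]
  · have hset : Tm k ⁻¹' Iic x ∩ Icc 0 1 = Icc 0 1 := by
      rw [inter_eq_right]
      intro u _
      simp only [mem_preimage, mem_Iic]
      exact le_trans (Tm_mem k hk u).2 hxm.le
    rw [hset, Real.volume_Icc, mes_apply k measurableSet_Iic]
    have he2 : Iic x ∩ Icc (0:ℝ) (1 - 1/(k:ℝ)) = Icc 0 (1 - 1/(k:ℝ)) := by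
      rw [inter_eq_right]
      intro t ht
      exact le_trans ht.2 hxm.le
    rw [he2, integral_density k hk (hm0' hk) le_rfl, Fc_m k hk]
    norm_num

/-- outer-measure lower bound through the parametrization -/
lemma mes_ge (k : ℕ) (hk : 2 ≤ k) (E : Set ℝ) :
    volume ({u | Tm k u ∈ E} ∩ Icc (0:ℝ) 1) ≤ mes k E := by
  rw [← map_eq k hk]
  have h1 : volume ({u | Tm k u ∈ E} ∩ Icc (0:ℝ) 1)
      = (volume.restrict (Icc (0:ℝ) 1)) (Tm k ⁻¹' E) := by
    rw [Measure.restrict_apply' measurableSet_Icc]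
    rfl
  rw [h1]
  exact Measure.le_map_apply (Tm_continuous k hk).measurable.aemeasurable E


lemma rpow_self_inv {a s : ℝ} (ha : 0 < a) (hs : s ≠ 0) : (a ^ s) ^ (1/s) = a := by
  rw [← Real.rpow_mul ha.le, mul_one_div, div_self hs, Real.rpow_one]

set_option maxHeartbeats 2000000 in
lemma mes_concave (k : ℕ) (hk : 2 ≤ k) {s : ℝ} (hs : s ≤ -1)
    (A B : Set ℝ) (hA : MeasurableSet A) (hB : MeasurableSet B)
    (h0A : 0 < mes k A) (h0B : 0 < mes k B) {lam : ℝ} (hlam : lam ∈ Icc (0:ℝ) 1) :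
    ((1 - lam) * ((mes k) A).toReal ^ s + lam * ((mes k) B).toReal ^ s) ^ (1/s)
      ≤ ((mes k) ((1 - lam) • A + lam • B)).toReal := by
  haveI hprob := mes_prob k hk
  have hs0 : s ≠ 0 := by intro h; rw [h] at hs; norm_num at hs
  set a := ((mes k) A).toReal with hadef
  set b := ((mes k) B).toReal with hbdef
  have ha : 0 < a := ENNReal.toReal_pos h0A.ne' (measure_ne_top _ _)
  have hb : 0 < b := ENNReal.toReal_pos h0B.ne' (measure_ne_top _ _)
  have hAne : A.Nonempty := nonempty_of_measure_ne_zero h0A.ne'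
  have hBne : B.Nonempty := nonempty_of_measure_ne_zero h0B.ne'
  rcases eq_or_lt_of_le hlam.1 with h0 | h0
  · -- lam = 0
    rw [← h0, sub_zero, one_smul, zero_smul_set hBne, add_zero]
    rw [one_mul, zero_mul, add_zero, rpow_self_inv ha hs0]
  rcases eq_or_lt_of_le hlam.2 with h1 | h1
  · -- lam = 1
    rw [h1, sub_self, zero_smul_set hAne, one_smul, zero_add]
    rw [zero_mul, zero_add, one_mul, rpow_self_inv hb hs0]
  -- main case 0 < lam < 1
  set C := (1 - lam) • A + lam • B with hCdef
  have step1 : ((1 - lam) * a ^ s + lam * b ^ s) ^ (1/s) ≤ hm lam a b :=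
    pm_le_hm hs ha hb hlam.1 hlam.2
  refine le_trans step1 ?_
  -- limit argument over ε
  have hmain : ∀ ε : ℝ, ε ∈ Ioo 0 (min a b) → hm lam (a - ε) (b - ε) ≤ ((mes k) C).toReal := by
    intro ε hε
    obtain ⟨hε0, hεm⟩ := hε
    have hεa : ε < a := lt_of_lt_of_le hεm (min_le_left _ _)
    have hεb : ε < b := lt_of_lt_of_le hεm (min_le_right _ _)
    have hk2 := kR2 hk
    set m : ℝ := 1 - 1/(k:ℝ) with hmdef
    have hTme : Measurable (Tm k) := (Tm_continuous k hk).measurable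
    -- restrict to the support
    have hrestr : ∀ (S : Set ℝ), MeasurableSet S → mes k (S ∩ Icc 0 m) = mes k S := by
      intro S hS
      have h1 := measure_inter_add_diff (μ := mes k) S (measurableSet_Icc (a := (0:ℝ)) (b := m))
      have h2 : mes k (S \ Icc 0 m) = 0 := by
        rw [mes_apply k (hS.diff measurableSet_Icc)]
        have he : (S \ Icc 0 m) ∩ Icc 0 m = ∅ := by
          rw [diff_eq, inter_assoc, compl_inter_self, inter_empty]
        rw [he]
        simp
      rw [← h1, h2, add_zero]
    -- compact subsets
    obtain ⟨KA, hKAsub, hKAcpt, hKAlt⟩ := (hA.inter measurableSet_Icc).exists_isCompact_lt_add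
      (μ := mes k) (measure_ne_top _ _) (ε := ENNReal.ofReal ε)
      (by simp [ENNReal.ofReal_eq_zero, not_le, hε0])
    obtain ⟨KB, hKBsub, hKBcpt, hKBlt⟩ := (hB.inter measurableSet_Icc).exists_isCompact_lt_add
      (μ := mes k) (measure_ne_top _ _) (ε := ENNReal.ofReal ε)
      (by simp [ENNReal.ofReal_eq_zero, not_le, hε0])
    rw [hrestr A hA] at hKAlt
    rw [hrestr B hB] at hKBlt
    set α : ℝ := (mes k KA).toReal with hαdef
    set β : ℝ := (mes k KB).toReal with hβdef
    have hαgt : a - ε < α := by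
      have h4 : (mes k A).toReal < (mes k KA).toReal + ε := by
        have hfin2 : mes k KA + ENNReal.ofReal ε ≠ ⊤ :=
          ENNReal.add_ne_top.2 ⟨measure_ne_top _ _, ENNReal.ofReal_ne_top⟩
        have h5 := (ENNReal.toReal_lt_toReal (measure_ne_top _ _) hfin2).2 hKAlt
        rwa [ENNReal.toReal_add (measure_ne_top _ _) ENNReal.ofReal_ne_top,
          ENNReal.toReal_ofReal hε0.le] at h5
      linarith
    have hβgt : b - ε < β := by
      have h4 : (mes k B).toReal < (mes k KB).toReal + ε := by
        have hfin2 : mes k KB + ENNReal.ofReal ε ≠ ⊤ :=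
          ENNReal.add_ne_top.2 ⟨measure_ne_top _ _, ENNReal.ofReal_ne_top⟩
        have h5 := (ENNReal.toReal_lt_toReal (measure_ne_top _ _) hfin2).2 hKBlt
        rwa [ENNReal.toReal_add (measure_ne_top _ _) ENNReal.ofReal_ne_top,
          ENNReal.toReal_ofReal hε0.le] at h5
      linarith
    have hαpos : 0 < α := by linarith
    have hβpos : 0 < β := by linarith
    -- parameter-space preimages
    set P : Set ℝ := Tm k ⁻¹' KA ∩ Icc 0 1 with hPdef
    set Q : Set ℝ := Tm k ⁻¹' KB ∩ Icc 0 1 with hQdef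
    have hPvol : volume P = ENNReal.ofReal α := by
      have h1 : mes k KA = volume P := by
        rw [← map_eq k hk, Measure.map_apply hTme hKAcpt.measurableSet,
          Measure.restrict_apply (hTme hKAcpt.measurableSet)]
      rw [← h1, hαdef, ENNReal.ofReal_toReal (measure_ne_top _ _)]
    have hQvol : volume Q = ENNReal.ofReal β := by
      have h1 : mes k KB = volume Q := by
        rw [← map_eq k hk, Measure.map_apply hTme hKBcpt.measurableSet,
          Measure.restrict_apply (hTme hKBcpt.measurableSet)]
      rw [← h1, hβdef, ENNReal.ofReal_toReal (measure_ne_top _ _)]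
    have hPcpt : IsCompact P :=
      IsCompact.of_isClosed_subset isCompact_Icc
        ((hKAcpt.isClosed.preimage (Tm_continuous k hk)).inter isClosed_Icc) inter_subset_right
    have hQcpt : IsCompact Q :=
      IsCompact.of_isClosed_subset isCompact_Icc
        ((hKBcpt.isClosed.preimage (Tm_continuous k hk)).inter isClosed_Icc) inter_subset_right
    obtain ⟨qP, hqPmem, hqPexp⟩ := exists_quantile hPcpt inter_subset_right hαpos hPvol
    obtain ⟨qQ, hqQmem, hqQexp⟩ := exists_quantile hQcpt inter_subset_right hβpos hQvol
    set K : ℝ := (k:ℝ) - 1 with hKdef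
    have hK1 : (1:ℝ) ≤ K := by rw [hKdef]; linarith
    have hK0 : (0:ℝ) < K := by linarith
    set w : ℝ → ℝ := fun θ => (hm lam (1 + K * qP θ) (1 + K * qQ θ) - 1) / K with hwdef
    -- pointwise facts
    have hfacts : ∀ θ ∈ Ioo (0:ℝ) 1,
        w θ ∈ Icc (0:ℝ) 1 ∧ Tm k (w θ) ∈ C := by
      intro θ hθ
      have hp := hqPmem θ hθ
      have hq := hqQmem θ hθ
      have hp01 : qP θ ∈ Icc (0:ℝ) 1 := hp.2
      have hq01 : qQ θ ∈ Icc (0:ℝ) 1 := hq.2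
      have hpA : Tm k (qP θ) ∈ A := (hKAsub hp.1).1
      have hqB : Tm k (qQ θ) ∈ B := (hKBsub hq.1).1
      have hX1 : (1:ℝ) ≤ 1 + K * qP θ := by nlinarith [hp01.1]
      have hY1 : (1:ℝ) ≤ 1 + K * qQ θ := by nlinarith [hq01.1]
      have hXk : 1 + K * qP θ ≤ 1 + K := by nlinarith [hp01.2]
      have hYk : 1 + K * qQ θ ≤ 1 + K := by nlinarith [hq01.2]
      have hXpos : (0:ℝ) < 1 + K * qP θ := by linarith
      have hYpos : (0:ℝ) < 1 + K * qQ θ := by linarith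
      have hH1 : (1:ℝ) ≤ hm lam (1 + K * qP θ) (1 + K * qQ θ) :=
        le_hm hlam.1 hlam.2 hXpos hYpos one_pos hX1 hY1
      have hHk : hm lam (1 + K * qP θ) (1 + K * qQ θ) ≤ 1 + K :=
        hm_le_max hlam.1 hlam.2 hXpos hYpos hXk hYk
      have hw01 : w θ ∈ Icc (0:ℝ) 1 := by
        constructor
        · rw [hwdef]
          apply div_nonneg (by linarith) hK0.le
        · rw [hwdef, div_le_one hK0]
          linarith
      refine ⟨hw01, ?_⟩
      have hwval : 1 + K * w θ = hm lam (1 + K * qP θ) (1 + K * qQ θ) := by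
        rw [hwdef]
        field_simp
        ring
      have hTw : Tm k (w θ) = (1 - lam) * Tm k (qP θ) + lam * Tm k (qQ θ) := by
        rw [Tm_eq k hw01, Tm_eq k hp01, Tm_eq k hq01, hwval,
          hm_eq_inv hlam.1 hlam.2 hXpos hYpos, one_div, inv_inv]
        rw [one_div, one_div]
        ring
      rw [hTw, hCdef]
      have h1 : (1 - lam) * Tm k (qP θ) ∈ (1 - lam) • A := by
        rw [← smul_eq_mul]
        exact smul_mem_smul_set hpA
      have h2 : lam * Tm k (qQ θ) ∈ lam • B := by
        rw [← smul_eq_mul]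
        exact smul_mem_smul_set hqB
      exact add_mem_add h1 h2
    -- expansion property
    set c0 : ℝ := hm lam α β with hc0def
    have hc0pos : 0 < c0 := hm_pos hlam.1 hlam.2 hαpos hβpos
    have hexp : ∀ x ∈ Ioo (0:ℝ) 1, ∀ y ∈ Ioo (0:ℝ) 1, x ≤ y →
        c0 * (y - x) ≤ w y - w x := by
      intro θ hθ θ' hθ' hle
      rcases eq_or_lt_of_le hle with heq | hlt
      · rw [heq]; simp
      set Δ : ℝ := θ' - θ with hΔdef
      have hΔ0 : 0 < Δ := by rw [hΔdef]; linarith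
      have hp := hqPmem θ hθ
      have hq := hqQmem θ hθ
      have hp' := hqPmem θ' hθ'
      have hq' := hqQmem θ' hθ'
      have hXpos : (0:ℝ) < 1 + K * qP θ := by nlinarith [hp.2.1]
      have hYpos : (0:ℝ) < 1 + K * qQ θ := by nlinarith [hq.2.1]
      have hPexp := hqPexp θ θ' hθ hθ' hle
      have hQexp := hqQexp θ θ' hθ hθ' hle
      have hXexp : 1 + K * qP θ + K * α * Δ ≤ 1 + K * qP θ' := by
        have := mul_le_mul_of_nonneg_left hPexp hK0.le
        rw [hΔdef]; nlinarith
      have hYexp : 1 + K * qQ θ + K * β * Δ ≤ 1 + K * qQ θ' := by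
        have := mul_le_mul_of_nonneg_left hQexp hK0.le
        rw [hΔdef]; nlinarith
      have hstep1 : hm lam (1 + K * qP θ + K * α * Δ) (1 + K * qQ θ + K * β * Δ)
          ≤ hm lam (1 + K * qP θ') (1 + K * qQ θ') :=
        hm_mono hlam.1 hlam.2 (by positivity) (by positivity) hXexp hYexp
      have hstep2 : hm lam (1 + K * qP θ) (1 + K * qQ θ) + hm lam (K * α * Δ) (K * β * Δ)
          ≤ hm lam (1 + K * qP θ + K * α * Δ) (1 + K * qQ θ + K * β * Δ) :=
        hm_superadd hlam.1 hlam.2 hXpos hYpos (by positivity) (by positivity)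
      have hstep3 : hm lam (K * α * Δ) (K * β * Δ) = (K * Δ) * c0 := by
        rw [show K * α * Δ = (K * Δ) * α by ring, show K * β * Δ = (K * Δ) * β by ring]
        exact hm_smul hlam.1 hlam.2 hαpos hβpos (by positivity)
      have hchain : hm lam (1 + K * qP θ) (1 + K * qQ θ) + (K * Δ) * c0
          ≤ hm lam (1 + K * qP θ') (1 + K * qQ θ') := by
        rw [← hstep3]
        exact le_trans hstep2 hstep1
      rw [hwdef]
      simp only []
      rw [div_sub_div_same, le_div_iff₀ hK0]
      have hring : c0 * (θ' - θ) * K = K * Δ * c0 := by rw [hΔdef]; ring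
      rw [hring]
      linarith
    -- measure chain
    have himg := volume_image_ge hc0pos (S := Ioo (0:ℝ) 1) hexp
    rw [Real.volume_Ioo, sub_zero, ENNReal.ofReal_one, mul_one] at himg
    have hsub2 : w '' Ioo (0:ℝ) 1 ⊆ {u | Tm k u ∈ C} ∩ Icc 0 1 := by
      rintro _ ⟨θ, hθ, rfl⟩
      obtain ⟨hw01, hTwC⟩ := hfacts θ hθ
      exact ⟨hTwC, hw01⟩
    have hfinal : ENNReal.ofReal c0 ≤ mes k C :=
      le_trans himg (le_trans (measure_mono hsub2) (mes_ge k hk C))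
    have hml : c0 ≤ ((mes k) C).toReal :=
      (ENNReal.ofReal_le_iff_le_toReal (measure_ne_top _ _)).1 hfinal
    calc hm lam (a - ε) (b - ε) ≤ hm lam α β :=
          hm_mono hlam.1 hlam.2 (by linarith) (by linarith) hαgt.le hβgt.le
      _ ≤ _ := hml
  -- take the limit ε → 0⁺
  have hminab : 0 < min a b := lt_min ha hb
  set f : ℝ → ℝ := fun ε => hm lam (a - ε) (b - ε) with hfdef
  have htend : Tendsto f (nhdsWithin 0 (Ioi 0)) (nhds (hm lam a b)) := by
    have hc : ContinuousAt f 0 := by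
      have hfeq : f = fun ε : ℝ =>
          (a - ε) * (b - ε) / ((1 - lam) * (b - ε) + lam * (a - ε)) := by
        funext ε
        rw [hfdef]
        simp only [hm]
      rw [hfeq]
      apply ContinuousAt.div
      · exact (continuousAt_const.sub continuousAt_id).mul (continuousAt_const.sub continuousAt_id)
      · exact (continuousAt_const.mul (continuousAt_const.sub continuousAt_id)).add
          (continuousAt_const.mul (continuousAt_const.sub continuousAt_id))
      · simp only [sub_zero]
        exact ne_of_gt (hm_denom_pos hlam.1 hlam.2 ha hb)
    have h0 : f 0 = hm lam a b := by rw [hfdef]; simp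
    have := hc.tendsto
    rw [h0] at this
    exact this.mono_left nhdsWithin_le_nhds
  apply le_of_tendsto htend
  filter_upwards [Ioo_mem_nhdsGT_of_mem (show (0:ℝ) ∈ Ico (0:ℝ) (min a b) from ⟨le_rfl, hminab⟩)]
  exact fun ε hε => hmain ε hε


lemma mes_integral (k : ℕ) (hk : 2 ≤ k) :
    ∫ r, r ∂(mes k) = 1 - Real.log k / ((k:ℝ) - 1) := by
  have hk2 := kR2 hk
  have hK0 : (0:ℝ) < (k:ℝ) - 1 := by linarith
  have hTme : Measurable (Tm k) := (Tm_continuous k hk).measurable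
  have hmap := integral_map (μ := volume.restrict (Icc (0:ℝ) 1)) hTme.aemeasurable
    (f := fun y : ℝ => y) measurable_id.aestronglyMeasurable
  have hstep : ∫ u, Tm k u ∂(volume.restrict (Icc (0:ℝ) 1))
      = ∫ u in (0:ℝ)..1, (1 - 1/(1 + ((k:ℝ)-1)*u)) := by
    rw [show ∫ u, Tm k u ∂(volume.restrict (Icc (0:ℝ) 1)) = ∫ u in Icc (0:ℝ) 1, Tm k u from rfl,
      integral_Icc_eq_integral_Ioc, ← intervalIntegral.integral_of_le zero_le_one]
    apply intervalIntegral.integral_congr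
    intro u hu
    rw [uIcc_of_le zero_le_one] at hu
    exact Tm_eq k hu
  rw [← map_eq k hk]
  rw [show (∫ r, r ∂(Measure.map (Tm k) (volume.restrict (Icc (0:ℝ) 1))))
      = ∫ u, Tm k u ∂(volume.restrict (Icc (0:ℝ) 1)) from hmap, hstep]
  have hd : ∀ u : ℝ, u ∈ uIcc (0:ℝ) 1 → 0 < 1 + ((k:ℝ)-1)*u := by
    intro u hu
    rw [uIcc_of_le zero_le_one] at hu
    nlinarith [hu.1]
  have hderiv : ∀ u ∈ uIcc (0:ℝ) 1,
      HasDerivAt (fun u => u - Real.log (1 + ((k:ℝ)-1)*u)/((k:ℝ)-1))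
        (1 - 1/(1 + ((k:ℝ)-1)*u)) u := by
    intro u hu
    have hdu := hd u hu
    have h1 : HasDerivAt (fun u : ℝ => 1 + ((k:ℝ)-1)*u) ((k:ℝ)-1) u := by
      simpa using ((hasDerivAt_id u).const_mul ((k:ℝ)-1)).const_add 1
    have h2 := (h1.log (ne_of_gt hdu)).div_const ((k:ℝ)-1)
    have h3 := (hasDerivAt_id u).sub h2
    rw [show (1:ℝ) - 1/(1 + ((k:ℝ)-1)*u) = 1 - ((k:ℝ)-1)/(1 + ((k:ℝ)-1)*u)/((k:ℝ)-1) by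
      rw [div_right_comm, div_self (ne_of_gt hK0)]]
    exact h3
  have hint : IntervalIntegrable (fun u => 1 - 1/(1 + ((k:ℝ)-1)*u)) volume 0 1 := by
    apply ContinuousOn.intervalIntegrable
    apply ContinuousOn.sub continuousOn_const
    apply ContinuousOn.div continuousOn_const
    · exact (continuous_const.add (continuous_const.mul continuous_id)).continuousOn
    · exact fun u hu => ne_of_gt (hd u hu)
  rw [intervalIntegral.integral_eq_sub_of_hasDerivAt hderiv hint]
  rw [show (1:ℝ) + ((k:ℝ)-1)*1 = (k:ℝ) by ring, show (1:ℝ) + ((k:ℝ)-1)*0 = 1 by ring,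
    Real.log_one]
  ring

lemma mes_Iic_bary (k : ℕ) (hk : 2 ≤ k) :
    ((mes k) (Iic (∫ r, r ∂(mes k)))).toReal = (Real.log k)⁻¹ - ((k:ℝ)-1)⁻¹ := by
  have hk2 := kR2 hk
  have hK0 : (0:ℝ) < (k:ℝ) - 1 := by linarith
  have hkpos : (0:ℝ) < (k:ℝ) := by linarith
  have hlogpos : 0 < Real.log k := Real.log_pos (by linarith)
  have hlogle : Real.log k ≤ (k:ℝ) - 1 := by
    have := Real.log_le_sub_one_of_pos hkpos
    linarith
  have hlogge : 1 - 1/(k:ℝ) ≤ Real.log k := by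
    have h := Real.log_le_sub_one_of_pos (show (0:ℝ) < (k:ℝ)⁻¹ by positivity)
    rw [Real.log_inv] at h
    rw [one_div]
    linarith
  set g : ℝ := 1 - Real.log k / ((k:ℝ)-1) with hgdef
  have hg0 : 0 ≤ g := by
    rw [hgdef]
    have : Real.log k / ((k:ℝ)-1) ≤ 1 := (div_le_one hK0).2 hlogle
    linarith
  have hgm : g ≤ 1 - 1/(k:ℝ) := by
    rw [hgdef]
    have h2 : 1/(k:ℝ) ≤ Real.log k / ((k:ℝ)-1) := by
      rw [div_le_div_iff₀ hkpos hK0]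
      have hkk : (k:ℝ) * (1/(k:ℝ)) = 1 := by field_simp
      nlinarith [mul_le_mul_of_nonneg_left hlogge hkpos.le, hkk]
    linarith
  rw [mes_integral k hk, ← hgdef, mes_Iic k hk hg0 hgm, Fc]
  have h1mg : 1 - g = Real.log k / ((k:ℝ)-1) := by rw [hgdef]; ring
  rw [h1mg, inv_div]
  have hnn : 0 ≤ ((k:ℝ)-1)⁻¹ * (((k:ℝ)-1)/Real.log k - 1) := by
    have h7 : (1:ℝ) ≤ ((k:ℝ)-1)/Real.log k := (one_le_div hlogpos).2 hlogle
    have h9 : (0:ℝ) ≤ ((k:ℝ)-1)⁻¹ := by positivity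
    nlinarith
  rw [ENNReal.toReal_ofReal hnn]
  have hKne : ((k:ℝ)-1) ≠ 0 := ne_of_gt hK0
  have e1 : ((k:ℝ)-1)⁻¹ * (((k:ℝ)-1)/Real.log k) = (Real.log k)⁻¹ := by
    rw [div_eq_mul_inv, ← mul_assoc, inv_mul_cancel₀ hKne, one_mul]
  rw [mul_sub, e1, mul_one]

end BMaux
end BMsection

set_option maxHeartbeats 2000000 in
/-- For fixed `s ≤ −1`, there is a sequence of `s`-concave probability measures on `ℝ`,
with densities supported on `[0, 1 − 1/k]`, whose barycenter half-line masses
`μ_k((-∞, g_{μ_k}])` tend to `0`. -/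
theorem stmt_14 (s : ℝ) (hs : s ≤ -1) :
    ∃ μ : ℕ → Measure ℝ,
      (∀ k, 2 ≤ k →
        IsProbabilityMeasure (μ k)
        ∧ (∀ (A B : Set ℝ), MeasurableSet A → MeasurableSet B →
            0 < (μ k) A → 0 < (μ k) B → ∀ lam ∈ Icc (0:ℝ) 1,
              ((1 - lam) * ((μ k) A).toReal ^ s + lam * ((μ k) B).toReal ^ s) ^ (1 / s)
                ≤ ((μ k) ((1 - lam) • A + lam • B)).toReal)
        ∧ (∃ ψ : ℝ → ℝ≥0∞, μ k = volume.withDensity ψ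
            ∧ ∀ t ∉ Icc (0:ℝ) (1 - 1 / (k : ℝ)), ψ t = 0))
      ∧ Tendsto (fun k => ((μ k) (Iic (∫ r, r ∂(μ k)))).toReal) atTop (nhds 0) := by
  refine ⟨fun k => BMaux.mes (max k 2), fun k hk => ?_, ?_⟩
  · simp only [max_eq_left hk]
    refine ⟨BMaux.mes_prob k hk, fun A B hA hB h0A h0B lam hlam => ?_, ?_⟩
    · exact BMaux.mes_concave k hk hs A B hA hB h0A h0B hlam
    · exact ⟨BMaux.dens k, rfl, fun t ht => BMaux.dens_zero k ht⟩
  · have heq : (fun k : ℕ => ((BMaux.mes (max k 2)) (Iic (∫ r, r ∂(BMaux.mes (max k 2))))).toReal)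
        =ᶠ[atTop] (fun k : ℕ => (Real.log k)⁻¹ - ((k:ℝ)-1)⁻¹) := by
      filter_upwards [eventually_ge_atTop 2] with k hk
      simp only [max_eq_left hk]
      rw [BMaux.mes_Iic_bary k hk]
    have hg : Tendsto (fun k : ℕ => (Real.log k)⁻¹ - ((k:ℝ)-1)⁻¹) atTop (nhds 0) := by
      have h1 : Tendsto (fun k : ℕ => Real.log k) atTop atTop :=
        Real.tendsto_log_atTop.comp tendsto_natCast_atTop_atTop
      have h2 : Tendsto (fun k : ℕ => (Real.log k)⁻¹) atTop (nhds 0) :=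
        tendsto_inv_atTop_zero.comp h1
      have h3 : Tendsto (fun k : ℕ => (k:ℝ) - 1) atTop atTop :=
        tendsto_atTop_add_const_right _ (-1) tendsto_natCast_atTop_atTop |>.congr
          (fun k => by ring)
      have h4 : Tendsto (fun k : ℕ => ((k:ℝ)-1)⁻¹) atTop (nhds 0) :=
        tendsto_inv_atTop_zero.comp h3
      simpa using h2.sub h4
    exact hg.congr' heq.symm
end

section
/- For p ∈ (−1, −1/2), let μ_k be the probability measure on ℝ with density proportional to (1−t)^{1/p} on [0, 1−1/k]. Then the barycenter is g_{μ_k} = 1 − ((p+1)/(2p+1)) · (1 − k^{-(2p+1)/p})/(1 − k^{-(p+1)/p}), and lim_{k→∞} μ_k((-∞, g_{μ_k}]) = 0. -/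
open intervalIntegral
open scoped NNReal ENNReal


open MeasureTheory Set Filter

/-- The density `(1−t)^{1/p}` on `[0, 1−1/k]` (and `0` elsewhere). -/
noncomputable def hDens (p : ℝ) (k : ℕ) (t : ℝ) : ℝ :=
  if t ∈ Icc (0:ℝ) (1 - 1 / (k : ℝ)) then (1 - t) ^ (1 / p) else 0

/-- The probability measure with density proportional to `(1−t)^{1/p}` on `[0, 1−1/k]`. -/
noncomputable def muK (p : ℝ) (k : ℕ) : Measure ℝ :=
  volume.withDensity (fun t => ENNReal.ofReal (hDens p k t / ∫ r, hDens p k r))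

/-- The barycenter of `muK p k`. -/
noncomputable def gK (p : ℝ) (k : ℕ) : ℝ := ∫ r, r ∂(muK p k)



set_option maxHeartbeats 1000000 in

lemma aux_cont {q a b : ℝ} (ha : a ≤ b) (hb : b < 1) :
    IntervalIntegrable (fun t : ℝ => (1 - t) ^ q) volume a b := by
  apply ContinuousOn.intervalIntegrable
  apply ContinuousOn.rpow_const
  · fun_prop
  · intro x hx
    rw [uIcc_of_le ha] at hx
    left
    have := hx.2
    intro h; linarith

lemma aux_int {q c : ℝ} (hq : q ≠ -1) (hc0 : 0 ≤ c) (hc : c < 1) :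
    ∫ t in (0:ℝ)..c, (1 - t) ^ q = (1 - (1 - c) ^ (q + 1)) / (q + 1) := by
  have h1 : (∫ t in (0:ℝ)..c, (1 - t) ^ q) = ∫ x in (1-c)..(1:ℝ), x ^ q := by
    simpa using intervalIntegral.integral_comp_sub_left (fun x : ℝ => x ^ q) 1 (a := 0) (b := c)
  rw [h1, integral_rpow (Or.inr ⟨hq, by
    intro h
    rw [uIcc_of_le (by linarith : (1:ℝ)-c ≤ 1)] at h
    simp at h
    linarith⟩)]
  rw [Real.one_rpow]

lemma hDens_indicator (p : ℝ) (k : ℕ) :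
    hDens p k = (Icc (0:ℝ) (1 - 1/(k:ℝ))).indicator (fun t => (1-t)^(1/p)) := by
  funext t
  simp [hDens, Set.indicator]

lemma kfacts {k : ℕ} (hk : 2 ≤ k) : 0 < 1/(k:ℝ) ∧ 1/(k:ℝ) ≤ 1/2 := by
  have h2 : (2:ℝ) ≤ (k:ℝ) := by exact_mod_cast hk
  constructor
  · positivity
  · apply one_div_le_one_div_of_le <;> linarith

lemma Z_eq {p : ℝ} (hp : p ≠ -1) {k : ℕ} (hk : 2 ≤ k) :
    ∫ r, hDens p k r = (1 - (1/(k:ℝ)) ^ (1/p + 1)) / (1/p + 1) := by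
  obtain ⟨hk0, hk2⟩ := kfacts hk
  have hc0 : (0:ℝ) ≤ 1 - 1/(k:ℝ) := by linarith
  have hc1 : 1 - 1/(k:ℝ) < 1 := by linarith
  rw [hDens_indicator, MeasureTheory.integral_indicator measurableSet_Icc,
    integral_Icc_eq_integral_Ioc, ← intervalIntegral.integral_of_le hc0,
    aux_int (by intro h; apply hp; rw [one_div, inv_eq_iff_eq_inv] at h; norm_num at h; exact h) hc0 hc1]
  ring_nf

lemma pfacts {p : ℝ} (hp : p ∈ Ioo (-1:ℝ) (-1/2)) : -2 < 1/p ∧ 1/p < -1 := by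
  obtain ⟨h1, h2⟩ := hp
  have hp0 : p < 0 := by linarith
  constructor
  · rw [lt_div_iff_of_neg hp0]; linarith
  · rw [div_lt_iff_of_neg hp0]; linarith

lemma M_eq {p : ℝ} (hp : p ∈ Ioo (-1:ℝ) (-1/2)) {k : ℕ} (hk : 2 ≤ k) :
    ∫ r, hDens p k r * r
      = (1 - (1/(k:ℝ)) ^ (1/p + 1)) / (1/p + 1)
        - (1 - (1/(k:ℝ)) ^ (1/p + 1 + 1)) / (1/p + 1 + 1) := by
  obtain ⟨hk0, hk2⟩ := kfacts hk
  obtain ⟨hpa, hpb⟩ := pfacts hp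
  have hc0 : (0:ℝ) ≤ 1 - 1/(k:ℝ) := by linarith
  have hc1 : 1 - 1/(k:ℝ) < 1 := by linarith
  have hind : (fun r => hDens p k r * r)
      = (Icc (0:ℝ) (1 - 1/(k:ℝ))).indicator (fun t => (1-t)^(1/p) * t) := by
    funext t
    simp only [hDens, Set.indicator]
    split <;> simp
  rw [hind, MeasureTheory.integral_indicator measurableSet_Icc,
    integral_Icc_eq_integral_Ioc, ← intervalIntegral.integral_of_le hc0]
  have hcongr : ∀ t ∈ uIcc (0:ℝ) (1 - 1/(k:ℝ)),
      (1-t)^(1/p) * t = (1-t)^(1/p) - (1-t)^(1/p + 1) := by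
    intro t ht
    rw [uIcc_of_le hc0] at ht
    have h1t : (1:ℝ) - t ≠ 0 := by
      have := ht.2; intro h; linarith
    rw [Real.rpow_add_one h1t]
    ring
  rw [intervalIntegral.integral_congr hcongr,
    intervalIntegral.integral_sub (aux_cont hc0 hc1) (aux_cont hc0 hc1),
    aux_int (by intro h; linarith) hc0 hc1, aux_int (by intro h; linarith) hc0 hc1]
  norm_num

lemma hDens_nonneg (p : ℝ) (k : ℕ) (t : ℝ) : 0 ≤ hDens p k t := by
  simp only [hDens]
  split
  · next h =>
    apply Real.rpow_nonneg
    have h2 : t ≤ 1 - 1/(k:ℝ) := h.2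
    have : (0:ℝ) ≤ 1/(k:ℝ) := by positivity
    linarith
  · exact le_refl _

lemma hDens_meas (p : ℝ) (k : ℕ) : Measurable (hDens p k) := by
  rw [hDens_indicator]
  exact Measurable.indicator (by fun_prop) measurableSet_Icc

lemma Z_pos {p : ℝ} (hp : p ∈ Ioo (-1:ℝ) (-1/2)) {k : ℕ} (hk : 2 ≤ k) :
    0 < ∫ r, hDens p k r := by
  obtain ⟨hk0, hk2⟩ := kfacts hk
  obtain ⟨hpa, hpb⟩ := pfacts hp
  rw [Z_eq (by intro h; rw [h] at hp; norm_num at hp) hk]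
  have hu : 1 < (1/(k:ℝ)) ^ (1/p + 1) := by
    rw [Real.one_lt_rpow_iff_of_pos hk0]
    exact Or.inr ⟨by linarith, by linarith⟩
  apply div_pos_of_neg_of_neg <;> linarith

lemma gK_int {p : ℝ} (hp : p ∈ Ioo (-1:ℝ) (-1/2)) {k : ℕ} (hk : 2 ≤ k) :
    gK p k = (∫ r, hDens p k r * r) / (∫ r, hDens p k r) := by
  have hZ0 : 0 < ∫ r, hDens p k r := Z_pos hp hk
  set Z := ∫ r, hDens p k r with hZ
  unfold gK muK
  rw [← hZ]
  have h1 : (fun t => ENNReal.ofReal (hDens p k t / Z))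
      = fun t => ((Real.toNNReal (hDens p k t / Z) : ℝ≥0) : ℝ≥0∞) := rfl
  rw [h1, integral_withDensity_eq_integral_smul
    (((hDens_meas p k).div_const Z).real_toNNReal) (fun r => r)]
  have h2 : ∀ r : ℝ, (Real.toNNReal (hDens p k r / Z)) • r = (hDens p k r * r) / Z := by
    intro r
    rw [NNReal.smul_def, smul_eq_mul, Real.coe_toNNReal _ (div_nonneg (hDens_nonneg p k r) hZ0.le)]
    ring
  simp_rw [h2]
  exact integral_div Z _

lemma gK_formula {p : ℝ} (hp : p ∈ Ioo (-1:ℝ) (-1/2)) {k : ℕ} (hk : 2 ≤ k) :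
    gK p k = 1 - ((1/p+1)/(1/p+2))
      * ((1 - (1/(k:ℝ)) ^ (1/p+2)) / (1 - (1/(k:ℝ)) ^ (1/p+1))) := by
  obtain ⟨hk0, hk2⟩ := kfacts hk
  obtain ⟨hpa, hpb⟩ := pfacts hp
  have hu : 1 < (1/(k:ℝ)) ^ (1/p + 1) := by
    rw [Real.one_lt_rpow_iff_of_pos hk0]
    exact Or.inr ⟨by linarith, by linarith⟩
  rw [gK_int hp hk, M_eq hp hk, Z_eq (by intro h; rw [h] at hp; norm_num at hp) hk]
  have e1 : 1/p + 1 + 1 = 1/p + 2 := by ring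
  rw [e1]
  set u := (1/(k:ℝ)) ^ (1/p + 1)
  set v := (1/(k:ℝ)) ^ (1/p + 2)
  have hb : 1/p + 1 ≠ 0 := by intro h; rw [show (1:ℝ)/p = -1 by linarith] at hpb; linarith
  have hg : 1/p + 2 ≠ 0 := by intro h; linarith [hpa]
  have hu0 : 1 - u ≠ 0 := by intro h; linarith
  field_simp

lemma u_gt {p : ℝ} (hp : p ∈ Ioo (-1:ℝ) (-1/2)) {k : ℕ} (hk : 2 ≤ k) :
    1 < (1/(k:ℝ)) ^ (1/p + 1) := by
  obtain ⟨hk0, hk2⟩ := kfacts hk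
  obtain ⟨hpa, hpb⟩ := pfacts hp
  rw [Real.one_lt_rpow_iff_of_pos hk0]
  exact Or.inr ⟨by linarith, by linarith⟩

lemma hDens_integrable {p : ℝ} (hp : p ∈ Ioo (-1:ℝ) (-1/2)) {k : ℕ} (hk : 2 ≤ k) :
    Integrable (hDens p k) := by
  obtain ⟨hk0, hk2⟩ := kfacts hk
  rw [hDens_indicator, integrable_indicator_iff measurableSet_Icc]
  apply ContinuousOn.integrableOn_Icc
  apply ContinuousOn.rpow_const
  · fun_prop
  · intro x hx
    left
    have := hx.2
    intro h; linarith

lemma mu_Iic {p : ℝ} (hp : p ∈ Ioo (-1:ℝ) (-1/2)) {k : ℕ} (hk : 2 ≤ k) (g : ℝ)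
    (hg0 : 0 ≤ g) (hg1 : g ≤ 1 - 1/(k:ℝ)) :
    ((muK p k) (Iic g)).toReal
      = (1 - (1-g) ^ (1/p + 1)) / (1 - (1/(k:ℝ)) ^ (1/p + 1)) := by
  obtain ⟨hk0, hk2⟩ := kfacts hk
  obtain ⟨hpa, hpb⟩ := pfacts hp
  have hZ0 : 0 < ∫ r, hDens p k r := Z_pos hp hk
  set Z := ∫ r, hDens p k r with hZ
  have hg1' : g < 1 := by linarith
  have hint : Integrable (fun t => hDens p k t / Z) (volume.restrict (Iic g)) :=
    (((hDens_integrable hp hk).div_const Z).restrict)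
  have hnn : 0 ≤ᵐ[volume.restrict (Iic g)] fun t => hDens p k t / Z :=
    Filter.Eventually.of_forall fun t => div_nonneg (hDens_nonneg p k t) hZ0.le
  unfold muK
  rw [← hZ, withDensity_apply _ measurableSet_Iic,
    ← ofReal_integral_eq_lintegral_ofReal hint hnn,
    ENNReal.toReal_ofReal (integral_nonneg_of_ae hnn)]
  rw [MeasureTheory.integral_div]
  have h1 : ∫ t in Iic g, hDens p k t = ∫ t in (0:ℝ)..g, (1-t)^(1/p) := by
    rw [hDens_indicator, MeasureTheory.integral_indicator measurableSet_Icc,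
      Measure.restrict_restrict measurableSet_Icc]
    have h2 : Icc (0:ℝ) (1 - 1/(k:ℝ)) ∩ Iic g = Icc 0 g := by
      ext t
      simp only [mem_inter_iff, mem_Icc, mem_Iic]
      constructor
      · rintro ⟨⟨a, b⟩, c⟩; exact ⟨a, c⟩
      · rintro ⟨a, c⟩; exact ⟨⟨a, le_trans c hg1⟩, c⟩
    rw [h2, integral_Icc_eq_integral_Ioc, ← intervalIntegral.integral_of_le hg0]
  rw [h1, aux_int (by intro h; linarith) hg0 hg1', hZ,
    Z_eq (by intro h; rw [h] at hp; norm_num at hp) hk]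
  have hb : 1/p + 1 ≠ 0 := by intro h; linarith
  have hu0 : 1 - (1/(k:ℝ)) ^ (1/p + 1) ≠ 0 := by
    have := u_gt hp hk; intro h; linarith
  field_simp


set_option maxHeartbeats 1000000 in
/-- For `p ∈ (−1, −1/2)`, the measures `μ_k` with density proportional to `(1−t)^{1/p}`
on `[0, 1−1/k]` have barycenter
`g_{μ_k} = 1 − ((p+1)/(2p+1))·(1 − k^{−(2p+1)/p})/(1 − k^{−(p+1)/p})`, and
`μ_k((-∞, g_{μ_k}]) → 0` as `k → ∞`. -/
theorem stmt_15 (p : ℝ) (hp : p ∈ Ioo (-1:ℝ) (-1/2)) :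
    (∀ k : ℕ, 2 ≤ k →
      gK p k = 1 - ((p + 1) / (2 * p + 1))
        * ((1 - (1 / (k : ℝ)) ^ ((2 * p + 1) / p)) / (1 - (1 / (k : ℝ)) ^ ((p + 1) / p))))
    ∧ Tendsto (fun k => ((muK p k) (Iic (gK p k))).toReal) atTop (nhds 0) := by
  obtain ⟨hpa, hpb⟩ := pfacts hp
  have hp1 : -1 < p := hp.1
  have hp2 : p < -1/2 := hp.2
  have hp0 : p ≠ 0 := by intro h; rw [h] at hp2; norm_num at hp2
  have h2p : 2*p + 1 ≠ 0 := by intro h; nlinarith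
  set β : ℝ := 1/p + 1 with hβ
  set γ : ℝ := 1/p + 2 with hγ
  have hβ0 : β < 0 := by rw [hβ]; linarith
  have hβ1 : -1 < β := by rw [hβ]; linarith
  have hγ0 : 0 < γ := by rw [hγ]; linarith
  have hγ1 : γ < 1 := by rw [hγ]; linarith
  have hβγ : γ = β + 1 := by rw [hβ, hγ]; ring
  set C : ℝ := (-β)/γ with hC
  have hC0 : 0 < C := by rw [hC]; apply div_pos <;> linarith
  have e1 : (p+1)/p = β := by rw [hβ]; field_simp; ring
  have e2 : (2*p+1)/p = γ := by rw [hγ]; field_simp; ring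
  have e3 : (p+1)/(2*p+1) = β/γ := by
    rw [div_eq_div_iff h2p (by linarith : γ ≠ 0), hβ, hγ]
    field_simp
    ring
  clear_value β γ C
  have hγne : γ ≠ 0 := by linarith
  constructor
  · intro k hk
    rw [e1, e2, e3, hβ, hγ]
    exact gK_formula hp hk
  -- Part 2
  have tendsto_u : Tendsto (fun k : ℕ => (1/(k:ℝ))^β) atTop atTop := by
    apply Tendsto.congr' (f₁ := fun k : ℕ => ((k:ℝ))^(-β))
    · filter_upwards [eventually_ge_atTop 1] with k hk
      have hk0 : (0:ℝ) ≤ (k:ℝ) := by positivity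
      rw [one_div, Real.inv_rpow hk0, ← Real.rpow_neg hk0]
    · exact (tendsto_rpow_atTop (by linarith : 0 < -β)).comp
        tendsto_natCast_atTop_atTop
  have tendsto_v : Tendsto (fun k : ℕ => (1/(k:ℝ))^γ) atTop (nhds 0) := by
    apply Tendsto.congr' (f₁ := fun k : ℕ => ((k:ℝ))^(-γ))
    · filter_upwards [eventually_ge_atTop 1] with k hk
      have hk0 : (0:ℝ) ≤ (k:ℝ) := by positivity
      rw [one_div, Real.inv_rpow hk0, ← Real.rpow_neg hk0]
    · exact (tendsto_rpow_neg_atTop hγ0).comp tendsto_natCast_atTop_atTop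
  have T1 : Tendsto (fun k : ℕ => (1/(k:ℝ))^β - 1) atTop atTop := by
    simpa [sub_eq_add_neg] using tendsto_atTop_add_const_right atTop (-1 : ℝ) tendsto_u
  -- key eventual formula
  have key : ∀ᶠ k : ℕ in atTop,
      ((muK p k) (Iic (gK p k))).toReal
        = C^β * (1 - (1/(k:ℝ))^γ)^β * ((1/(k:ℝ))^β - 1)^(-β-1)
          - ((1/(k:ℝ))^β - 1)⁻¹ := by
    filter_upwards [eventually_ge_atTop 2, T1.eventually_ge_atTop (C + 1),
      tendsto_v.eventually (eventually_le_nhds (by linarith : (0:ℝ) < 1/2)),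
      tendsto_v.eventually (eventually_le_nhds (by linarith : (0:ℝ) < C/2))]
      with k hk hku hv1 hv2
    obtain ⟨hk0, hk2⟩ := kfacts hk
    set x : ℝ := 1/(k:ℝ) with hx
    set u : ℝ := x^β with hu
    set v : ℝ := x^γ with hvv
    have hu1 : 1 < u := by rw [hu, hx, hβ]; exact u_gt hp hk
    have hv0 : 0 < v := by rw [hvv]; exact Real.rpow_pos_of_pos hk0 _
    have hxne : x ≠ 0 := ne_of_gt hk0
    have hxu : x * u = v := by
      rw [hu, hvv, hβγ, Real.rpow_add_one hxne]; ring
    clear_value x u v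
    have hune : u - 1 ≠ 0 := by intro h; linarith
    have h1u : 1 - u ≠ 0 := by intro h; linarith
    have hub : (0:ℝ) < u - 1 := by linarith
    have hg : gK p k = 1 - C * (1 - v) / (u - 1) := by
      rw [gK_formula hp hk, ← hβ, ← hγ, ← hx, ← hu, ← hvv, hC]
      field_simp
      ring
    have h1g : 1 - gK p k = C * (1 - v) / (u - 1) := by rw [hg]; ring
    have hCv : 0 < C * (1 - v) := by nlinarith
    have hg0 : 0 ≤ gK p k := by
      rw [hg]
      have h1 : C * (1 - v) / (u - 1) ≤ 1 := by
        rw [div_le_one hub]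
        nlinarith
      linarith
    have hg1 : gK p k ≤ 1 - x := by
      rw [hg]
      have h1 : x ≤ C * (1 - v) / (u - 1) := by
        rw [le_div_iff₀ hub]
        nlinarith
      linarith
    rw [mu_Iic hp hk _ hg0 (by rw [← hx]; exact hg1), ← hβ, ← hx, ← hu]
    rw [h1g, Real.div_rpow hCv.le hub.le, Real.mul_rpow hC0.le (by linarith : (0:ℝ) ≤ 1 - v)]
    have h4 : (u-1)^(-β-1) = ((u-1)^β * (u-1))⁻¹ := by
      rw [← Real.rpow_add_one hune, ← Real.rpow_neg hub.le]
      congr 1; ring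
    rw [h4]
    have hupow : (0:ℝ) < (u-1)^β := Real.rpow_pos_of_pos hub _
    field_simp
    ring
  -- the limit of the explicit formula
  have T2 : Tendsto (fun k : ℕ => ((1/(k:ℝ))^β - 1)^(-β-1)) atTop (nhds 0) := by
    have h : Tendsto (fun y : ℝ => y ^ (-β-1)) atTop (nhds 0) := by
      have := tendsto_rpow_neg_atTop (by linarith : (0:ℝ) < β + 1)
      simpa [show -(β+1) = -β-1 from by ring] using this
    exact h.comp T1
  have T3 : Tendsto (fun k : ℕ => (1 - (1/(k:ℝ))^γ)^β) atTop (nhds 1) := by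
    have h1 : Tendsto (fun k : ℕ => 1 - (1/(k:ℝ))^γ) atTop (nhds 1) := by
      simpa using tendsto_const_nhds.sub tendsto_v
    have h2 : ContinuousAt (fun y : ℝ => y ^ β) 1 :=
      Real.continuousAt_rpow_const 1 β (Or.inl one_ne_zero)
    have h3 := h2.tendsto.comp h1
    simpa [Function.comp_def] using h3
  have T4 : Tendsto (fun k : ℕ => ((1/(k:ℝ))^β - 1)⁻¹) atTop (nhds 0) :=
    tendsto_inv_atTop_zero.comp T1
  have Total : Tendsto (fun k : ℕ =>
      C^β * (1 - (1/(k:ℝ))^γ)^β * ((1/(k:ℝ))^β - 1)^(-β-1)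
        - ((1/(k:ℝ))^β - 1)⁻¹) atTop (nhds 0) := by
    have h := (((tendsto_const_nhds : Tendsto (fun _ : ℕ => C^β) atTop (nhds (C^β))).mul
      T3).mul T2).sub T4
    simpa using h
  have keq : (fun k : ℕ => ((muK p k) (Iic (gK p k))).toReal)
      =ᶠ[atTop] (fun k : ℕ => C^β * (1 - (1/(k:ℝ))^γ)^β * ((1/(k:ℝ))^β - 1)^(-β-1)
        - ((1/(k:ℝ))^β - 1)⁻¹) := key
  exact Tendsto.congr' keq.symm Total
end

section
/- Let α₁, α₂ ∈ ℝ with α₁ + α₂ > 0 and set α = α₁α₂/(α₁+α₂). Then for all λ ∈ (0,1) and all positive reals a₁, a₂, b₁, b₂: M_{α₁}^{(λ)}(a₁,b₁) · M_{α₂}^{(λ)}(a₂,b₂) ≥ M_{α}^{(λ)}(a₁a₂, b₁b₂), where M_p^{(λ)}(a,b) = ((1−λ)a^p + λb^p)^{1/p} for p ≠ 0 and a^{1−λ}b^λ for p = 0. -/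
open Set

/-- The `λ`-weighted `p`-mean of two positive reals. -/
noncomputable def pMean (p lam a b : ℝ) : ℝ :=
  if p = 0 then a ^ (1 - lam) * b ^ lam else ((1 - lam) * a ^ p + lam * b ^ p) ^ (1 / p)

lemma pMean_pos {p lam a b : ℝ} (hl0 : 0 < lam) (hl1 : lam < 1) (ha : 0 < a) (hb : 0 < b) :
    0 < pMean p lam a b := by
  unfold pMean
  split_ifs with h
  · positivity
  · have h1 : 0 < 1 - lam := by linarith
    have : 0 < (1 - lam) * a ^ p + lam * b ^ p := by positivity
    positivity

/-- Two-point weighted Hölder inequality. -/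
lemma holder2 {p q w₁ w₂ X₁ X₂ Y₁ Y₂ : ℝ} (hp : 0 < p) (hq : 0 < q)
    (hpq : 1 / p + 1 / q = 1) (hw₁ : 0 < w₁) (hw₂ : 0 < w₂)
    (hX₁ : 0 < X₁) (hX₂ : 0 < X₂) (hY₁ : 0 < Y₁) (hY₂ : 0 < Y₂) :
    w₁ * (X₁ * Y₁) + w₂ * (X₂ * Y₂) ≤
      (w₁ * X₁ ^ p + w₂ * X₂ ^ p) ^ (1 / p) * (w₁ * Y₁ ^ q + w₂ * Y₂ ^ q) ^ (1 / q) := by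
  set S := w₁ * X₁ ^ p + w₂ * X₂ ^ p with hSdef
  set T := w₁ * Y₁ ^ q + w₂ * Y₂ ^ q with hTdef
  have hS : 0 < S := by positivity
  have hT : 0 < T := by positivity
  have hSp : 0 < S ^ (1 / p) := Real.rpow_pos_of_pos hS _
  have hTq : 0 < T ^ (1 / q) := Real.rpow_pos_of_pos hT _
  have key : ∀ X Y : ℝ, 0 < X → 0 < Y →
      X * Y ≤ S ^ (1 / p) * T ^ (1 / q) * ((1 / p) * (X ^ p / S) + (1 / q) * (Y ^ q / T)) := by
    intro X Y hX hY
    have h := Real.geom_mean_le_arith_mean2_weighted (by positivity : (0:ℝ) ≤ 1 / p)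
      (by positivity : (0:ℝ) ≤ 1 / q) (by positivity : (0:ℝ) ≤ X ^ p / S)
      (by positivity : (0:ℝ) ≤ Y ^ q / T) hpq
    have e : (X ^ p / S) ^ (1 / p) * (Y ^ q / T) ^ (1 / q)
        = (X * Y) / (S ^ (1 / p) * T ^ (1 / q)) := by
      rw [Real.div_rpow (by positivity) hS.le, Real.div_rpow (by positivity) hT.le,
        one_div, one_div, Real.rpow_rpow_inv hX.le hp.ne', Real.rpow_rpow_inv hY.le hq.ne']
      field_simp
    rw [e] at h
    calc X * Y = S ^ (1 / p) * T ^ (1 / q) * ((X * Y) / (S ^ (1 / p) * T ^ (1 / q))) := by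
          field_simp
      _ ≤ S ^ (1 / p) * T ^ (1 / q) * ((1 / p) * (X ^ p / S) + (1 / q) * (Y ^ q / T)) := by
          apply mul_le_mul_of_nonneg_left h (by positivity)
  have h1 := key X₁ Y₁ hX₁ hY₁
  have h2 := key X₂ Y₂ hX₂ hY₂
  have hsum : w₁ * (X₁ * Y₁) + w₂ * (X₂ * Y₂) ≤
      S ^ (1 / p) * T ^ (1 / q) *
        (w₁ * ((1 / p) * (X₁ ^ p / S) + (1 / q) * (Y₁ ^ q / T)) +
         w₂ * ((1 / p) * (X₂ ^ p / S) + (1 / q) * (Y₂ ^ q / T))) := by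
    nlinarith [mul_le_mul_of_nonneg_left h1 hw₁.le, mul_le_mul_of_nonneg_left h2 hw₂.le]
  have hone : w₁ * ((1 / p) * (X₁ ^ p / S) + (1 / q) * (Y₁ ^ q / T)) +
      w₂ * ((1 / p) * (X₂ ^ p / S) + (1 / q) * (Y₂ ^ q / T)) = 1 := by
    have e2 : (1 / p) * ((w₁ * X₁ ^ p + w₂ * X₂ ^ p) / S)
        + (1 / q) * ((w₁ * Y₁ ^ q + w₂ * Y₂ ^ q) / T)
        = w₁ * ((1 / p) * (X₁ ^ p / S) + (1 / q) * (Y₁ ^ q / T)) +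
          w₂ * ((1 / p) * (X₂ ^ p / S) + (1 / q) * (Y₂ ^ q / T)) := by ring
    rw [← e2, ← hSdef, ← hTdef, div_self hS.ne', div_self hT.ne', mul_one, mul_one, hpq]
  rw [hone, mul_one] at hsum
  exact hsum

/-- Core case: both exponents positive. -/
lemma pMean_mul_le_of_pos {p q lam : ℝ} (hp : 0 < p) (hq : 0 < q)
    (hl0 : 0 < lam) (hl1 : lam < 1) {x u y v : ℝ}
    (hx : 0 < x) (hu : 0 < u) (hy : 0 < y) (hv : 0 < v) :
    pMean (p * q / (p + q)) lam (x * y) (u * v) ≤ pMean p lam x u * pMean q lam y v := by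
  set r := p * q / (p + q) with hrdef
  have hr : 0 < r := by positivity
  have hr0 : r ≠ 0 := hr.ne'
  have hp0 : p ≠ 0 := hp.ne'
  have hq0 : q ≠ 0 := hq.ne'
  have hs0 : p + q ≠ 0 := (by positivity : (0:ℝ) < p + q).ne'
  have hpq' : 1 / (p / r) + 1 / (q / r) = 1 := by
    rw [hrdef]; field_simp; ring
  have hw₁ : 0 < 1 - lam := by linarith
  have h := holder2 (by positivity : 0 < p / r) (by positivity : 0 < q / r) hpq' hw₁ hl0
    (Real.rpow_pos_of_pos hx r) (Real.rpow_pos_of_pos hu r)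
    (Real.rpow_pos_of_pos hy r) (Real.rpow_pos_of_pos hv r)
  have hA : 0 < (1 - lam) * x ^ p + lam * u ^ p := by positivity
  have hB : 0 < (1 - lam) * y ^ q + lam * v ^ q := by positivity
  have e1 : (x ^ r) ^ (p / r) = x ^ p := by
    rw [← Real.rpow_mul hx.le]; congr 1; field_simp
  have e2 : (u ^ r) ^ (p / r) = u ^ p := by
    rw [← Real.rpow_mul hu.le]; congr 1; field_simp
  have e3 : (y ^ r) ^ (q / r) = y ^ q := by
    rw [← Real.rpow_mul hy.le]; congr 1; field_simp
  have e4 : (v ^ r) ^ (q / r) = v ^ q := by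
    rw [← Real.rpow_mul hv.le]; congr 1; field_simp
  rw [e1, e2, e3, e4, one_div_div, one_div_div] at h
  have hgoal : ((1 - lam) * (x * y) ^ r + lam * (u * v) ^ r) ^ (1 / r)
      ≤ (((1 - lam) * x ^ p + lam * u ^ p) ^ (r / p)
          * ((1 - lam) * y ^ q + lam * v ^ q) ^ (r / q)) ^ (1 / r) := by
    apply Real.rpow_le_rpow (by positivity) _ (by positivity)
    rw [Real.mul_rpow hx.le hy.le, Real.mul_rpow hu.le hv.le]
    exact h
  have e5 : (((1 - lam) * x ^ p + lam * u ^ p) ^ (r / p)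
          * ((1 - lam) * y ^ q + lam * v ^ q) ^ (r / q)) ^ (1 / r)
      = ((1 - lam) * x ^ p + lam * u ^ p) ^ (1 / p)
          * ((1 - lam) * y ^ q + lam * v ^ q) ^ (1 / q) := by
    rw [Real.mul_rpow (by positivity) (by positivity), ← Real.rpow_mul hA.le,
      ← Real.rpow_mul hB.le]
    congr 1
    · congr 1; field_simp
    · congr 1; field_simp
  rw [e5] at hgoal
  simpa [pMean, hr0, hp0, hq0] using hgoal

lemma geom_le_pMean {p lam a b : ℝ} (hp : 0 < p) (hl0 : 0 < lam) (hl1 : lam < 1)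
    (ha : 0 < a) (hb : 0 < b) : a ^ (1 - lam) * b ^ lam ≤ pMean p lam a b := by
  have hw₁ : 0 < 1 - lam := by linarith
  have h := Real.geom_mean_le_arith_mean2_weighted hw₁.le hl0.le
    (by positivity : (0:ℝ) ≤ a ^ p) (by positivity : (0:ℝ) ≤ b ^ p) (by ring)
  have h2 := Real.rpow_le_rpow (by positivity) h (by positivity : (0:ℝ) ≤ 1 / p)
  have e : ((a ^ p) ^ (1 - lam) * (b ^ p) ^ lam) ^ (1 / p) = a ^ (1 - lam) * b ^ lam := by
    rw [Real.mul_rpow (by positivity) (by positivity), ← Real.rpow_mul ha.le,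
      ← Real.rpow_mul hb.le, ← Real.rpow_mul ha.le, ← Real.rpow_mul hb.le]
    congr 1
    · congr 1; field_simp
    · congr 1; field_simp
  rw [e] at h2
  simpa [pMean, hp.ne'] using h2

lemma pMean_neg {p lam a b : ℝ} (hp : p ≠ 0) (hl0 : 0 < lam) (hl1 : lam < 1)
    (ha : 0 < a) (hb : 0 < b) :
    pMean (-p) lam a b = (pMean p lam a⁻¹ b⁻¹)⁻¹ := by
  have hpne : -p ≠ 0 := neg_ne_zero.mpr hp
  have hw₁ : 0 < 1 - lam := by linarith
  simp only [pMean, if_neg hp, if_neg hpne]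
  rw [Real.inv_rpow ha.le, Real.inv_rpow hb.le, ← Real.rpow_neg ha.le, ← Real.rpow_neg hb.le,
    ← Real.rpow_neg_one]
  rw [← Real.rpow_mul (by positivity : (0:ℝ) ≤ (1 - lam) * a ^ (-p) + lam * b ^ (-p))]
  congr 1
  field_simp

/-- Refined AM-GM type inequality for weighted means: if `α₁ + α₂ > 0` and
`α = α₁α₂/(α₁+α₂)`, then `M_{α₁}^{(λ)}(a₁,b₁) · M_{α₂}^{(λ)}(a₂,b₂) ≥ M_α^{(λ)}(a₁a₂, b₁b₂)`. -/
theorem stmt_16 (α₁ α₂ : ℝ) (hα : 0 < α₁ + α₂) (α : ℝ) (hαdef : α = α₁ * α₂ / (α₁ + α₂))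
    (lam : ℝ) (hlam : lam ∈ Ioo (0:ℝ) 1)
    (a₁ a₂ b₁ b₂ : ℝ) (ha₁ : 0 < a₁) (ha₂ : 0 < a₂) (hb₁ : 0 < b₁) (hb₂ : 0 < b₂) :
    pMean α lam (a₁ * a₂) (b₁ * b₂) ≤ pMean α₁ lam a₁ b₁ * pMean α₂ lam a₂ b₂ := by
  obtain ⟨hl0, hl1⟩ := hlam
  have hw₁ : 0 < 1 - lam := by linarith
  rcases eq_or_ne α₁ 0 with h1 | h1
  · subst h1
    have hα₂ : 0 < α₂ := by linarith
    have hαz : α = 0 := by rw [hαdef]; ring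
    subst hαz
    have unf0 : ∀ a b : ℝ, pMean 0 lam a b = a ^ (1 - lam) * b ^ lam := fun a b => if_pos rfl
    have e : pMean 0 lam (a₁ * a₂) (b₁ * b₂)
        = pMean 0 lam a₁ b₁ * (a₂ ^ (1 - lam) * b₂ ^ lam) := by
      rw [unf0, unf0, Real.mul_rpow ha₁.le ha₂.le, Real.mul_rpow hb₁.le hb₂.le]
      ring
    rw [e]
    exact mul_le_mul_of_nonneg_left (geom_le_pMean hα₂ hl0 hl1 ha₂ hb₂)
      (pMean_pos hl0 hl1 ha₁ hb₁).le
  rcases eq_or_ne α₂ 0 with h2 | h2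
  · subst h2
    have hα₁ : 0 < α₁ := by linarith
    have hαz : α = 0 := by rw [hαdef]; ring
    subst hαz
    have unf0 : ∀ a b : ℝ, pMean 0 lam a b = a ^ (1 - lam) * b ^ lam := fun a b => if_pos rfl
    have e : pMean 0 lam (a₁ * a₂) (b₁ * b₂)
        = (a₁ ^ (1 - lam) * b₁ ^ lam) * pMean 0 lam a₂ b₂ := by
      rw [unf0, unf0, Real.mul_rpow ha₁.le ha₂.le, Real.mul_rpow hb₁.le hb₂.le]
      ring
    rw [e]
    exact mul_le_mul_of_nonneg_right (geom_le_pMean hα₁ hl0 hl1 ha₁ hb₁)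
      (pMean_pos hl0 hl1 ha₂ hb₂).le
  rcases lt_or_gt_of_ne h1 with hneg1 | hpos1
  · -- α₁ < 0, so α₂ > 0, α < 0
    have hα₂ : 0 < α₂ := by linarith
    have hnα : 0 < -α := by
      rw [hαdef]
      have : α₁ * α₂ < 0 := mul_neg_of_neg_of_pos hneg1 hα₂
      simpa using div_neg_of_neg_of_pos this hα
    have hden : -α + α₂ = α₂ ^ 2 / (α₁ + α₂) := by
      rw [hαdef]; field_simp; ring
    have hdenpos : 0 < -α + α₂ := by rw [hden]; positivity
    have hexp : -α * α₂ / (-α + α₂) = -α₁ := by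
      rw [hden, hαdef]; field_simp
    have key := pMean_mul_le_of_pos hnα hα₂ hl0 hl1
      (x := (a₁ * a₂)⁻¹) (u := (b₁ * b₂)⁻¹) (y := a₂) (v := b₂)
      (by positivity) (by positivity) ha₂ hb₂
    rw [hexp] at key
    have ex : (a₁ * a₂)⁻¹ * a₂ = a₁⁻¹ := by field_simp
    have ey : (b₁ * b₂)⁻¹ * b₂ = b₁⁻¹ := by field_simp
    rw [ex, ey] at key
    -- key : pMean (-α₁) lam a₁⁻¹ b₁⁻¹ ≤ pMean (-α) lam (a₁*a₂)⁻¹ (b₁*b₂)⁻¹ * pMean α₂ lam a₂ b₂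
    set Q := pMean (-α₁) lam a₁⁻¹ b₁⁻¹ with hQ
    set P := pMean (-α) lam (a₁ * a₂)⁻¹ (b₁ * b₂)⁻¹ with hP
    set R := pMean α₂ lam a₂ b₂ with hR
    have hQpos : 0 < Q := pMean_pos hl0 hl1 (by positivity) (by positivity)
    have hPpos : 0 < P := pMean_pos hl0 hl1 (by positivity) (by positivity)
    have hRpos : 0 < R := pMean_pos hl0 hl1 ha₂ hb₂
    have eα : pMean α lam (a₁ * a₂) (b₁ * b₂) = P⁻¹ := by
      have h := pMean_neg (p := -α) (a := a₁ * a₂) (b := b₁ * b₂) hnα.ne' hl0 hl1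
        (by positivity) (by positivity)
      rw [neg_neg] at h
      rw [hP]; exact h
    have eα₁ : pMean α₁ lam a₁ b₁ = Q⁻¹ := by
      have h := pMean_neg (p := -α₁) (by linarith : -α₁ ≠ 0) hl0 hl1 ha₁ hb₁
      rw [neg_neg] at h
      rw [hQ]; exact h
    rw [eα, eα₁]
    clear_value P Q R
    have hmul := mul_le_mul_of_nonneg_left key (by positivity : (0:ℝ) ≤ P⁻¹ * Q⁻¹)
    have ee1 : P⁻¹ * Q⁻¹ * Q = P⁻¹ := by
      rw [show P⁻¹ * Q⁻¹ * Q = P⁻¹ * (Q⁻¹ * Q) by ring, inv_mul_cancel₀ hQpos.ne', mul_one]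
    have ee2 : P⁻¹ * Q⁻¹ * (P * R) = Q⁻¹ * R := by
      rw [show P⁻¹ * Q⁻¹ * (P * R) = P⁻¹ * P * (Q⁻¹ * R) by ring, inv_mul_cancel₀ hPpos.ne',
        one_mul]
    rw [ee1, ee2] at hmul
    exact hmul
  rcases lt_or_gt_of_ne h2 with hneg2 | hpos2
  · -- α₂ < 0, so α₁ > 0, α < 0
    have hα₁ : 0 < α₁ := by linarith
    have hnα : 0 < -α := by
      rw [hαdef]
      have : α₁ * α₂ < 0 := mul_neg_of_pos_of_neg hα₁ hneg2
      simpa using div_neg_of_neg_of_pos this hα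
    have hden : α₁ + -α = α₁ ^ 2 / (α₁ + α₂) := by
      rw [hαdef]; field_simp; ring
    have hdenpos : 0 < α₁ + -α := by rw [hden]; positivity
    have hexp : α₁ * -α / (α₁ + -α) = -α₂ := by
      rw [hden, hαdef]; field_simp
    have key := pMean_mul_le_of_pos hα₁ hnα hl0 hl1
      (x := a₁) (u := b₁) (y := (a₁ * a₂)⁻¹) (v := (b₁ * b₂)⁻¹)
      ha₁ hb₁ (by positivity) (by positivity)
    rw [hexp] at key
    have ex : a₁ * (a₁ * a₂)⁻¹ = a₂⁻¹ := by field_simp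
    have ey : b₁ * (b₁ * b₂)⁻¹ = b₂⁻¹ := by field_simp
    rw [ex, ey] at key
    set Q := pMean (-α₂) lam a₂⁻¹ b₂⁻¹ with hQ
    set P := pMean (-α) lam (a₁ * a₂)⁻¹ (b₁ * b₂)⁻¹ with hP
    set R := pMean α₁ lam a₁ b₁ with hR
    have hQpos : 0 < Q := pMean_pos hl0 hl1 (by positivity) (by positivity)
    have hPpos : 0 < P := pMean_pos hl0 hl1 (by positivity) (by positivity)
    have hRpos : 0 < R := pMean_pos hl0 hl1 ha₁ hb₁
    have eα : pMean α lam (a₁ * a₂) (b₁ * b₂) = P⁻¹ := by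
      have h := pMean_neg (p := -α) (a := a₁ * a₂) (b := b₁ * b₂) hnα.ne' hl0 hl1
        (by positivity) (by positivity)
      rw [neg_neg] at h
      rw [hP]; exact h
    have eα₂ : pMean α₂ lam a₂ b₂ = Q⁻¹ := by
      have h := pMean_neg (p := -α₂) (by linarith : -α₂ ≠ 0) hl0 hl1 ha₂ hb₂
      rw [neg_neg] at h
      rw [hQ]; exact h
    rw [eα, eα₂]
    clear_value P Q R
    have hmul := mul_le_mul_of_nonneg_left key (by positivity : (0:ℝ) ≤ P⁻¹ * Q⁻¹)
    have ee1 : P⁻¹ * Q⁻¹ * Q = P⁻¹ := by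
      rw [show P⁻¹ * Q⁻¹ * Q = P⁻¹ * (Q⁻¹ * Q) by ring, inv_mul_cancel₀ hQpos.ne', mul_one]
    have ee2 : P⁻¹ * Q⁻¹ * (R * P) = R * Q⁻¹ := by
      rw [show P⁻¹ * Q⁻¹ * (R * P) = P⁻¹ * P * (R * Q⁻¹) by ring, inv_mul_cancel₀ hPpos.ne',
        one_mul]
    rw [ee1, ee2] at hmul
    exact hmul
  · -- both positive
    subst hαdef
    exact pMean_mul_le_of_pos hpos1 hpos2 hl0 hl1 ha₁ hb₁ ha₂ hb₂
end
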